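/- arXiv:1711.09853 — 10 statements merged into one kernel-verified Lean document; each statement's English description precedes it below -/
import Mathlib

section
/- Let a ∈ ℝ, σ > 0, D > 0 be real numbers. Consider the optimization problem: minimize −(1/2)·log Q + (1/2)·log σ over real numbers P > 0 and Q > 0 subject to (i) P ≤ a²·P + σ, (ii) P ≤ D, and (iii) the 2×2 real matrix [[P − Q, P·a], [a·P, a²·P + σ]] is positive semidefinite. Then the infimum of this problem equals max{0, (1/2)·log(a² + σ/D)}, and the infimum is attained. (This shows that the semidefinite representation of the Gaussian SRD function specializes, in the scalar case, to the known closed-form scalar SRD formula.) -/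
/-!
In the variables `u = σ / P` and `v = σ / Q` the problem becomes linear: positive semidefiniteness
of the matrix (nonnegative determinant) reads `a² + u ≤ v`, the constraint `P ≤ a²P + σ` reads
`1 ≤ a² + u`, `P ≤ D` reads `σ / D ≤ u`, and the objective is `½ log v`. Hence the least feasible
`v` is `max 1 (a² + σ / D)`, and the log of a max is the max of the logs.
-/

open Real

theorem Matrix.posSemidef_fin_two_iff {p q r : ℝ} :
    (!![p, q; q, r]).PosSemidef ↔ 0 ≤ p ∧ 0 ≤ r ∧ q ^ 2 ≤ p * r := by
  constructor
  · intro h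
    have h₀ := h.dotProduct_mulVec_nonneg ![1, 0]
    have h₁ := h.dotProduct_mulVec_nonneg ![0, 1]
    have hr := h.dotProduct_mulVec_nonneg ![r, -q]
    have hp := h.dotProduct_mulVec_nonneg ![q, -(p + 1)]
    simp [Matrix.mulVec, dotProduct, Fin.sum_univ_two] at h₀ h₁ hr hp
    refine ⟨h₀, h₁, ?_⟩
    rcases h₁.eq_or_lt with hr₀ | hr₀ <;> nlinarith
  · rintro ⟨hp, hr, hdet⟩
    refine Matrix.PosSemidef.of_dotProduct_mulVec_nonneg ?_ fun x ↦ ?_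
    · ext i j
      fin_cases i <;> fin_cases j <;> rfl
    · simp [Matrix.mulVec, dotProduct, Fin.sum_univ_two]
      rcases hp.eq_or_lt with rfl | hp₀
      · obtain rfl : q = 0 := by nlinarith
        nlinarith [mul_nonneg hr (sq_nonneg (x 1))]
      · nlinarith [sq_nonneg (p * x 0 + q * x 1), mul_nonneg (mul_nonneg hp hr) (sq_nonneg (x 1)),
          mul_nonneg (sq_nonneg q) (sq_nonneg (x 1))]

lemma posSemidef_iff_add_div_le_div {a σ P Q : ℝ} (hσ : 0 < σ) (hP : 0 < P) (hQ : 0 < Q) :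
    (!![P - Q, P * a; a * P, a ^ 2 * P + σ]).PosSemidef ↔ a ^ 2 + σ / P ≤ σ / Q := by
  have hratio : a ^ 2 + σ / P ≤ σ / Q ↔ Q * (a ^ 2 * P + σ) ≤ σ * P := by
    rw [show a ^ 2 + σ / P = (a ^ 2 * P + σ) / P by field_simp, div_le_div_iff₀ hP hQ]
    constructor <;> intro h <;> linarith
  rw [mul_comm P a, Matrix.posSemidef_fin_two_iff, hratio]
  constructor
  · rintro ⟨-, -, hdet⟩
    nlinarith
  · intro h
    refine ⟨?_, by positivity, by nlinarith⟩
    nlinarith [mul_nonneg hQ.le (mul_nonneg (sq_nonneg a) hP.le)]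

lemma le_mul_add_iff_one_le_add_div {b σ P : ℝ} (hP : 0 < P) :
    P ≤ b * P + σ ↔ 1 ≤ b + σ / P := by
  rw [← sub_le_iff_le_add' (b := b), le_div_iff₀ hP, sub_mul, one_mul, sub_le_iff_le_add']

lemma max_zero_half_log {t : ℝ} (ht : 0 < t) :
    max 0 (1 / 2 * log t) = 1 / 2 * log (max 1 t) := by
  rcases le_total t 1 with h | h
  · rw [max_eq_left h, log_one, mul_zero, max_eq_left (by nlinarith [log_nonpos ht.le h])]
  · rw [max_eq_right h, max_eq_right (by nlinarith [log_nonneg h])]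

/-- The scalar specialization of the semidefinite representation of the Gaussian
sequential rate-distortion function equals the closed-form scalar SRD formula
`max {0, (1/2)·log(a² + σ/D)}`, and the infimum is attained. -/
theorem stmt_1 (a σ D : ℝ) (hσ : σ > 0) (hD : D > 0) :
    IsLeast
      {x : ℝ | ∃ P Q : ℝ, P > 0 ∧ Q > 0 ∧ P ≤ a ^ 2 * P + σ ∧ P ≤ D ∧
        (!![P - Q, P * a; a * P, a ^ 2 * P + σ]).PosSemidef ∧
        x = -(1 / 2) * Real.log Q + (1 / 2) * Real.log σ}
      (max 0 ((1 / 2) * Real.log (a ^ 2 + σ / D))) := by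
  have hvalue : ∀ Q, 0 < Q → -(1 / 2) * log Q + (1 / 2) * log σ = 1 / 2 * log (σ / Q) := by
    intro Q hQ
    rw [log_div hσ.ne' hQ.ne']
    ring
  rw [max_zero_half_log (by positivity)]
  constructor
  · -- `σ / P` is the least value both constraints on `P` allow; `σ / Q = a² + σ / P` kills the determinant
    set m := max (1 - a ^ 2) (σ / D)
    have hm : 0 < m := (div_pos hσ hD).trans_le (le_max_right _ _)
    refine ⟨σ / m, σ / max 1 (a ^ 2 + σ / D), by positivity, by positivity, ?_, ?_, ?_, ?_⟩
    · rw [le_mul_add_iff_one_le_add_div (by positivity), div_div_cancel₀ hσ.ne']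
      linarith [le_max_left (1 - a ^ 2) (σ / D)]
    · rw [div_le_iff₀ hm, ← div_le_iff₀' hD]
      exact le_max_right _ _
    · rw [posSemidef_iff_add_div_le_div hσ (by positivity) (by positivity), div_div_cancel₀ hσ.ne',
        div_div_cancel₀ hσ.ne', ← max_add_add_left, add_sub_cancel]
    · rw [hvalue _ (by positivity), div_div_cancel₀ hσ.ne']
  · rintro x ⟨P, Q, hP, hQ, hstab, hPD, hpsd, rfl⟩
    rw [le_mul_add_iff_one_le_add_div hP] at hstab
    rw [posSemidef_iff_add_div_le_div hσ hP hQ] at hpsd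
    have hDP : a ^ 2 + σ / D ≤ a ^ 2 + σ / P := by gcongr
    rw [hvalue Q hQ]
    gcongr
    exact max_le (hstab.trans hpsd) (hDP.trans hpsd)
end

section
/- Let P and Σ be p×p real positive definite matrices, A an arbitrary p×p real matrix, and Q a p×p real symmetric matrix. Then the 2p×2p block matrix [[P − Q, P·Aᵀ], [A·P, A·P·Aᵀ + Σ]] is positive semidefinite if and only if (P⁻¹ + Aᵀ·Σ⁻¹·A)⁻¹ − Q is positive semidefinite. -/
/-!
By the Woodbury identity, `(P⁻¹ + Aᴴ Σ⁻¹ A)⁻¹ = P - P Aᴴ (A P Aᴴ + Σ)⁻¹ A P`. Since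
`A P Aᴴ + Σ ≻ 0`, the block matrix is positive semidefinite iff its Schur complement with respect
to the lower right block, `P - Q - P Aᴴ (A P Aᴴ + Σ)⁻¹ A P`, is; and this is the matrix above
minus `Q`.
-/

open Matrix

namespace Matrix

variable {m n : Type*} [Fintype m] [Fintype n]
variable {K : Type*} [Field K] [PartialOrder K] [StarRing K] [StarOrderedRing K]

theorem PosDef.mul_mul_conjTranspose_add {P : Matrix n n K} {S : Matrix m m K} (hP : P.PosDef)
    (hS : S.PosDef) (A : Matrix m n K) : (A * P * Aᴴ + S).PosDef :=
  PosDef.posSemidef_add (hP.posSemidef.mul_mul_conjTranspose_same A) hS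

variable [DecidableEq m] [DecidableEq n]

theorem inv_add_mul_inv_mul_inv_eq_sub {R : Type*} [CommRing R] (P : Matrix n n R)
    (U : Matrix n m R) (S : Matrix m m R) (V : Matrix m n R) (hP : IsUnit P) (hS : IsUnit S)
    (hVPU : IsUnit (V * P * U + S)) :
    (P⁻¹ + U * S⁻¹ * V)⁻¹ = P - P * U * (V * P * U + S)⁻¹ * V * P := by
  have hP' : P⁻¹⁻¹ = P := nonsing_inv_nonsing_inv P ((isUnit_iff_isUnit_det P).mp hP)
  have hS' : S⁻¹⁻¹ = S := nonsing_inv_nonsing_inv S ((isUnit_iff_isUnit_det S).mp hS)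
  have hVPU' : IsUnit (S⁻¹⁻¹ + V * P⁻¹⁻¹ * U) := by rwa [hS', hP', add_comm]
  rw [add_mul_mul_inv_eq_sub _ _ _ _ (isUnit_nonsing_inv_iff.mpr hP)
    (isUnit_nonsing_inv_iff.mpr hS) hVPU', hS', hP', add_comm S]

theorem posSemidef_fromBlocks_iff_posSemidef_inv_add_sub {P Q : Matrix n n K}
    {S : Matrix m m K} (hP : P.PosDef) (hS : S.PosDef) (A : Matrix m n K) :
    (fromBlocks (P - Q) (P * Aᴴ) (A * P) (A * P * Aᴴ + S)).PosSemidef ↔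
      ((P⁻¹ + Aᴴ * S⁻¹ * A)⁻¹ - Q).PosSemidef := by
  have hD := hP.mul_mul_conjTranspose_add hS A
  have : Invertible (A * P * Aᴴ + S) := hD.isUnit.invertible
  have hB : (P * Aᴴ)ᴴ = A * P := by rw [conjTranspose_mul, conjTranspose_conjTranspose, hP.1.eq]
  have hSchur := PosDef.fromBlocks₂₂ (P - Q) (P * Aᴴ) hD
  rw [hB] at hSchur
  rw [hSchur, inv_add_mul_inv_mul_inv_eq_sub _ _ _ _ hP.isUnit hS.isUnit hD.isUnit,
    sub_right_comm, Matrix.mul_assoc _ A P]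

end Matrix

theorem stmt_4_general {p : ℕ} (P Sw A Q : Matrix (Fin p) (Fin p) ℝ)
    (hP : P.PosDef) (hSw : Sw.PosDef) :
    (Matrix.fromBlocks (P - Q) (P * Aᵀ) (A * P) (A * P * Aᵀ + Sw)).PosSemidef ↔
      ((P⁻¹ + Aᵀ * Sw⁻¹ * A)⁻¹ - Q).PosSemidef := by
  simpa only [conjTranspose_eq_transpose_of_trivial] using
    posSemidef_fromBlocks_iff_posSemidef_inv_add_sub hP hSw A

/-- Schur-complement characterization: for `P ≻ 0`, `Σ ≻ 0`, `Q` symmetric, the block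
matrix `[[P − Q, P·Aᵀ], [A·P, A·P·Aᵀ + Σ]]` is positive semidefinite iff
`(P⁻¹ + Aᵀ·Σ⁻¹·A)⁻¹ − Q ⪰ 0`. -/
theorem stmt_4 {p : ℕ} (P Sw A Q : Matrix (Fin p) (Fin p) ℝ)
    (hP : P.PosDef) (hSw : Sw.PosDef) (hQ : Q.IsHermitian) :
    (Matrix.fromBlocks (P - Q) (P * Aᵀ) (A * P) (A * P * Aᵀ + Sw)).PosSemidef ↔
      ((P⁻¹ + Aᵀ * Sw⁻¹ * A)⁻¹ - Q).PosSemidef :=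
  stmt_4_general P Sw A Q hP hSw
end

section
/- Let P and Σ be p×p real positive definite matrices, A an arbitrary p×p real matrix, and Q a p×p real positive definite matrix. If the 2p×2p block matrix [[P − Q, P·Aᵀ], [A·P, A·P·Aᵀ + Σ]] is positive semidefinite, then det(Q) ≤ det(Σ)·det(P)/det(A·P·Aᵀ + Σ), i.e., −(1/2)·log det Q + (1/2)·log det Σ ≥ (1/2)·log det(A·P·Aᵀ + Σ) − (1/2)·log det P. -/
/-!
Taking the Schur complement of the positive definite block `D = A P Aᵀ + Σ` turns the hypothesis
into `Q ⪯ P - P Aᵀ D⁻¹ A P`. The determinant is monotone for the Loewner order on positive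
definite matrices (conjugating by `Q^{-1/2}` reduces to `1 ⪯ N`, whose eigenvalues are all `≥ 1`),
and expanding `det [[P, P Aᵀ], [A P, D]]` around either diagonal block shows
`det (P - P Aᵀ D⁻¹ A P) · det D = det P · det Σ`.
-/

open Matrix
open scoped MatrixOrder

namespace Matrix

variable {m n : Type*} [Fintype m] [Fintype n] [DecidableEq m] [DecidableEq n]

theorem one_le_det_of_one_le {N : Matrix n n ℝ} (h : 1 ≤ N) : 1 ≤ N.det := by
  have hN : N.IsHermitian := IsSelfAdjoint.of_nonneg (zero_le_one.trans h)
  have hspec : ∀ x ∈ spectrum ℝ N, 1 ≤ x := by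
    simpa using (algebraMap_le_iff_le_spectrum (r := (1 : ℝ)) (a := N) hN).mp (by simpa using h)
  rw [hN.det_eq_prod_eigenvalues]
  exact Finset.one_le_prod fun i _ => by
    simpa using hspec _ (hN.eigenvalues_mem_spectrum_real i)

theorem PosDef.det_le_det_of_le {Q M : Matrix n n ℝ} (hQ : Q.PosDef) (h : Q ≤ M) : Q.det ≤ M.det := by
  set S := CFC.sqrt Q
  have hS : S.IsHermitian := (CFC.sqrt_nonneg Q).isSelfAdjoint
  have hSS : S.det * S.det = Q.det := by
    rw [← det_mul, CFC.sqrt_mul_sqrt_self Q hQ.posSemidef.nonneg]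
  have hSunit : IsUnit S.det := (mul_self_ne_zero.mp (hSS ▸ hQ.det_pos.ne')).isUnit
  have hone : 1 ≤ S⁻¹ * M * S⁻¹ := by
    calc (1 : Matrix n n ℝ) = S⁻¹ * (S * S) * S⁻¹ := by
          rw [← Matrix.mul_assoc, nonsing_inv_mul _ hSunit, Matrix.one_mul,
            mul_nonsing_inv _ hSunit]
      _ = S⁻¹ * Q * S⁻¹ := by rw [CFC.sqrt_mul_sqrt_self Q hQ.posSemidef.nonneg]
      _ ≤ S⁻¹ * M * S⁻¹ := IsSelfAdjoint.conjugate_le_conjugate h hS.inv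
  have hdet := one_le_det_of_one_le hone
  rw [det_mul, det_mul, det_nonsing_inv, Ring.inverse_eq_inv', mul_right_comm, ← mul_inv, hSS,
    ← div_eq_inv_mul, one_le_div hQ.det_pos] at hdet
  exact hdet

theorem det_sub_mul_inv_mul_mul_det {α : Type*} [CommRing α] (A : Matrix m m α) (B : Matrix m n α) (C : Matrix n m α) (D : Matrix n n α)
    [Invertible A] [Invertible D] :
    det (A - B * D⁻¹ * C) * det D = det A * det (D - C * A⁻¹ * B) := by
  rw [mul_comm, ← invOf_eq_nonsing_inv, ← invOf_eq_nonsing_inv, ← det_fromBlocks₂₂,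
    det_fromBlocks₁₁]

end Matrix

/-- If the block matrix `[[P − Q, P·Aᵀ], [A·P, A·P·Aᵀ + Σ]]` is positive semidefinite
with `P, Σ, Q ≻ 0`, then `det Q ≤ det Σ · det P / det(A·P·Aᵀ + Σ)`, equivalently
`−(1/2)·log det Q + (1/2)·log det Σ ≥ (1/2)·log det(A·P·Aᵀ + Σ) − (1/2)·log det P`. -/
theorem stmt_5 {p : ℕ} (P Sw A Q : Matrix (Fin p) (Fin p) ℝ)
    (hP : P.PosDef) (hSw : Sw.PosDef) (hQ : Q.PosDef)
    (hblk : (Matrix.fromBlocks (P - Q) (P * Aᵀ) (A * P) (A * P * Aᵀ + Sw)).PosSemidef) :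
    Q.det ≤ Sw.det * P.det / (A * P * Aᵀ + Sw).det ∧
      -(1 / 2) * Real.log Q.det + (1 / 2) * Real.log Sw.det ≥
        (1 / 2) * Real.log (A * P * Aᵀ + Sw).det - (1 / 2) * Real.log P.det := by
  set D := A * P * Aᵀ + Sw
  have hD : D.PosDef := by
    simpa [conjTranspose_eq_transpose_of_trivial] using
      PosDef.posSemidef_add (hP.posSemidef.mul_mul_conjTranspose_same A) hSw
  have := hD.isUnit.invertible
  have := hP.isUnit.invertible
  have hPA : (P * Aᵀ)ᴴ = A * P := by
    rw [conjTranspose_mul, hP.isHermitian.eq, conjTranspose_eq_transpose_of_trivial,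
      transpose_transpose]
  have hschur : Q ≤ P - P * Aᵀ * D⁻¹ * (A * P) := by
    rw [← hPA, PosDef.fromBlocks₂₂ _ _ hD] at hblk
    rwa [Matrix.le_iff, sub_right_comm, ← hPA]
  have hdet : (P - P * Aᵀ * D⁻¹ * (A * P)).det * D.det = P.det * Sw.det := by
    rw [det_sub_mul_inv_mul_mul_det, mul_inv_cancel_right_of_invertible, ← Matrix.mul_assoc,
      add_sub_cancel_left]
  have hmain : Q.det ≤ Sw.det * P.det / D.det := by
    rw [le_div_iff₀ hD.det_pos, mul_comm Sw.det, ← hdet]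
    exact mul_le_mul_of_nonneg_right (hQ.det_le_det_of_le hschur) hD.det_pos.le
  refine ⟨hmain, ?_⟩
  have hlog := Real.log_le_log hQ.det_pos hmain
  rw [Real.log_div (mul_pos hSw.det_pos hP.det_pos).ne' hD.det_pos.ne',
    Real.log_mul hSw.det_pos.ne' hP.det_pos.ne'] at hlog
  linarith
end

section
/- Let M be a p×p real positive semidefinite (symmetric) matrix. Then the map P ↦ log det(P⁻¹ + M) is convex on the cone of p×p real positive definite matrices: for all positive definite P₁, P₂ and all t ∈ [0,1], log det((t·P₁ + (1−t)·P₂)⁻¹ + M) ≤ t·log det(P₁⁻¹ + M) + (1−t)·log det(P₂⁻¹ + M). -/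
/-!
Write `G(P) = (P⁻¹ + M)⁻¹`. Completing the square gives, in the Loewner order,
`G(P) = min_Z ((1 - M Z)ᴴ P (1 - M Z) + Zᴴ M Z)`, the minimum being attained at `Z = G(P)`.
A pointwise minimum of functions affine in `P` is concave, so `P ↦ G(P)` is operator concave.
Since `log det` is monotone and concave on positive definite matrices,
`P ↦ log det G(P) = -log det (P⁻¹ + M)` is concave, which is the claim.
-/

open Matrix

section LoewnerOrder

open scoped MatrixOrder ComplexOrder

namespace Matrix

variable {n 𝕜 : Type*} [RCLike 𝕜]

lemma convex_setOf_posDef [Fintype n] : Convex ℝ {A : Matrix n n 𝕜 | A.PosDef} := by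
  intro A hA B hB a b ha hb hab
  rcases ha.eq_or_lt with rfl | ha
  · simp_all
  · exact (hA.smul ha).add_posSemidef (hB.posSemidef.smul hb)

variable [Fintype n] [DecidableEq n]

lemma PosDef.exists_isUnit_eq_star_mul_self {A : Matrix n n 𝕜} (hA : A.PosDef) :
    ∃ S : Matrix n n 𝕜, IsUnit S ∧ A = star S * S := by
  obtain ⟨S, rfl⟩ := CStarAlgebra.nonneg_iff_eq_star_mul_self.mp hA.posSemidef.nonneg
  refine ⟨S, ?_, rfl⟩
  have hdet := (isUnit_iff_isUnit_det _).mp hA.isUnit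
  rw [det_mul] at hdet
  exact (isUnit_iff_isUnit_det _).mpr (isUnit_of_mul_isUnit_right hdet)

lemma exists_eq_star_mul_mul {S : Matrix n n 𝕜} (hS : IsUnit S) (B : Matrix n n 𝕜) :
    ∃ C, B = star S * C * S := by
  have h : S⁻¹ * S = 1 := nonsing_inv_mul _ ((isUnit_iff_isUnit_det _).mp hS)
  refine ⟨star S⁻¹ * B * S⁻¹, ?_⟩
  rw [← mul_assoc, ← mul_assoc, ← star_mul, h, mul_assoc, h, star_one, one_mul, mul_one]

lemma det_star_mul_mul (S C : Matrix n n 𝕜) :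
    (star S * C * S).det = (star S * S).det * C.det := by
  simp only [det_mul]
  ring

lemma IsHermitian.det_smul_one_add_smul {C : Matrix n n ℝ} (hC : C.IsHermitian) (a b : ℝ) :
    (a • 1 + b • C).det = ∏ i, (a + b * hC.eigenvalues i) := by
  conv_lhs => rw [hC.spectral_theorem]
  rw [← map_one (Unitary.conjStarAlgAut ℝ _ hC.eigenvectorUnitary), ← map_smul, ← map_smul,
    ← map_add, Unitary.conjStarAlgAut_apply, det_mul_right_comm,
    Unitary.mul_star_self_of_mem hC.eigenvectorUnitary.2, one_mul, ← diagonal_one,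
    ← diagonal_smul, ← diagonal_smul, diagonal_add, det_diagonal]
  simp

lemma PosSemidef.one_le_det_one_add {K : Matrix n n ℝ} (hK : K.PosSemidef) :
    1 ≤ (1 + K).det := by
  have h := hK.1.det_smul_one_add_smul 1 1
  simp only [one_smul, one_mul] at h
  rw [h]
  exact Finset.one_le_prod fun i _ ↦ le_add_of_nonneg_right (hK.eigenvalues_nonneg i)

lemma PosDef.mul_log_det_le_log_det_smul_one_add_smul {C : Matrix n n ℝ} (hC : C.PosDef)
    {a b : ℝ} (ha : 0 ≤ a) (hb : 0 ≤ b) (hab : a + b = 1) :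
    b * Real.log C.det ≤ Real.log (a • 1 + b • C).det := by
  have heig := hC.eigenvalues_pos
  have hpos : ∀ i, 0 < a + b * hC.1.eigenvalues i := fun i ↦ by
    rcases ha.eq_or_lt with rfl | ha
    · simpa [show b = 1 by linarith] using heig i
    · exact add_pos_of_pos_of_nonneg ha (mul_nonneg hb (heig i).le)
  rw [hC.1.det_smul_one_add_smul, hC.1.det_eq_prod_eigenvalues,
    Real.log_prod fun i _ ↦ (hpos i).ne', ← RCLike.ofReal_prod]
  simp only [RCLike.ofReal_real_eq_id, id, Real.log_prod fun i _ ↦ (heig i).ne', Finset.mul_sum]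
  gcongr with i
  simpa using strictConcaveOn_log_Ioi.concaveOn.2 (Set.mem_Ioi.2 one_pos) (heig i) ha hb hab

lemma det_le_det_of_le {A B : Matrix n n ℝ} (hA : A.PosDef) (hAB : A ≤ B) : A.det ≤ B.det := by
  obtain ⟨S, hS, rfl⟩ := hA.exists_isUnit_eq_star_mul_self
  obtain ⟨C, rfl⟩ := exists_eq_star_mul_mul hS B
  have hC : (C - 1).PosSemidef := by
    rw [← hS.posSemidef_star_left_conjugate_iff]
    simpa [mul_sub, sub_mul] using le_iff.mp hAB
  rw [det_star_mul_mul, ← add_sub_cancel 1 C]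
  exact le_mul_of_one_le_right hA.det_pos.le hC.one_le_det_one_add

lemma concaveOn_log_det :
    ConcaveOn ℝ {A : Matrix n n ℝ | A.PosDef} (fun A ↦ Real.log A.det) := by
  refine ⟨convex_setOf_posDef, fun A hA B hB a b ha hb hab ↦ ?_⟩
  obtain ⟨S, hS, rfl⟩ := hA.exists_isUnit_eq_star_mul_self
  obtain ⟨C, rfl⟩ := exists_eq_star_mul_mul hS B
  have hC : C.PosDef := hS.posDef_star_left_conjugate_iff.mp hB
  have hcomb : a • (star S * S) + b • (star S * C * S) = star S * (a • 1 + b • C) * S := by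
    simp [mul_add, add_mul]
  have hcombC : (a • 1 + b • C).PosDef :=
    convex_setOf_posDef (PosDef.one (R := ℝ)) hC ha hb hab
  have hD := hA.det_pos
  simp only [smul_eq_mul, hcomb, det_star_mul_mul]
  rw [Real.log_mul hD.ne' hC.det_pos.ne', Real.log_mul hD.ne' hcombC.det_pos.ne']
  have hsplit : a * Real.log (star S * S).det + b * Real.log (star S * S).det =
      Real.log (star S * S).det := by
    rw [← add_mul, hab, one_mul]
  linarith [hC.mul_log_det_le_log_det_smul_one_add_smul ha hb hab]

def quadBound (P M Z : Matrix n n 𝕜) : Matrix n n 𝕜 :=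
  star (1 - M * Z) * P * (1 - M * Z) + star Z * M * Z

lemma quadBound_smul_add_smul (P₁ P₂ M Z : Matrix n n 𝕜) {a b : ℝ} (hab : a + b = 1) :
    quadBound (a • P₁ + b • P₂) M Z = a • quadBound P₁ M Z + b • quadBound P₂ M Z := by
  simp only [quadBound, Matrix.mul_add, Matrix.add_mul, Matrix.mul_smul, Matrix.smul_mul]
  linear_combination (norm := module) hab.symm • (star Z * M * Z)

lemma quadBound_eq {P M : Matrix n n 𝕜} (hP : P.IsHermitian) (hPu : IsUnit P)
    (hM : M.IsHermitian) (hF : IsUnit (P⁻¹ + M)) (Z : Matrix n n 𝕜) :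
    quadBound P M Z = (P⁻¹ + M)⁻¹ +
      star (Z - (P⁻¹ + M)⁻¹) * (M * P * M + M) * (Z - (P⁻¹ + M)⁻¹) := by
  set G := (P⁻¹ + M)⁻¹
  set K := M * P * M + M
  have hPP : P * P⁻¹ = 1 := mul_nonsing_inv _ ((isUnit_iff_isUnit_det _).mp hPu)
  have hMG : M * G = 1 - P⁻¹ * G := by
    rw [eq_sub_iff_add_eq, ← add_mul, add_comm]
    exact mul_nonsing_inv _ ((isUnit_iff_isUnit_det _).mp hF)
  have hPs : star P = P := hP
  have hMs : star M = M := hM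
  have hG : star G = G := (hP.inv.add hM).inv
  have hK : star K = K := by simp only [K, star_add, star_mul, hPs, hMs, mul_assoc]
  have hKG : K * G = M * P := calc
    K * G = M * P * (M * G) + M * G := by simp only [K]; noncomm_ring
    _ = M * P - M * (P * P⁻¹) * G + M * G := by rw [hMG]; noncomm_ring
    _ = M * P := by rw [hPP]; noncomm_ring
  have hGK : G * K = P * M := by
    simpa only [star_mul, hG, hK, hPs, hMs] using congrArg star hKG
  have hGKG : G * K * G = P - G := by
    rw [hGK, mul_assoc, hMG, mul_sub, ← mul_assoc, hPP]
    noncomm_ring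
  calc quadBound P M Z
      = P - P * M * Z - star Z * (M * P) + star Z * K * Z := by
        simp only [quadBound, K, star_sub, star_one, star_mul, hMs]
        noncomm_ring
    _ = G + star Z * K * Z - star Z * (K * G) - (G * K) * Z + G * K * G := by
        rw [hGKG, hKG, hGK]
        noncomm_ring
    _ = G + star (Z - G) * K * (Z - G) := by
        rw [star_sub, hG]
        noncomm_ring

lemma inv_inv_add_le_quadBound {P M : Matrix n n 𝕜} (hP : P.PosDef) (hM : M.PosSemidef)
    (Z : Matrix n n 𝕜) : (P⁻¹ + M)⁻¹ ≤ quadBound P M Z := by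
  have hK : (M * P * M + M).PosSemidef := by
    simpa only [hM.1.eq] using (hP.posSemidef.conjTranspose_mul_mul_same M).add hM
  rw [le_iff, quadBound_eq hP.1 hP.isUnit hM.1 (hP.inv.add_posSemidef hM).isUnit,
    add_sub_cancel_left]
  exact hK.conjTranspose_mul_mul_same _

lemma quadBound_inv_add {P M : Matrix n n 𝕜} (hP : P.PosDef) (hM : M.PosSemidef) :
    quadBound P M (P⁻¹ + M)⁻¹ = (P⁻¹ + M)⁻¹ := by
  rw [quadBound_eq hP.1 hP.isUnit hM.1 (hP.inv.add_posSemidef hM).isUnit]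
  simp

lemma concaveOn_inv_inv_add {M : Matrix n n 𝕜} (hM : M.PosSemidef) :
    ConcaveOn ℝ {P : Matrix n n 𝕜 | P.PosDef} (fun P ↦ (P⁻¹ + M)⁻¹) := by
  refine ⟨convex_setOf_posDef, fun P₁ hP₁ P₂ hP₂ a b ha hb hab ↦ ?_⟩
  set G := ((a • P₁ + b • P₂)⁻¹ + M)⁻¹
  calc a • (P₁⁻¹ + M)⁻¹ + b • (P₂⁻¹ + M)⁻¹
      ≤ a • quadBound P₁ M G + b • quadBound P₂ M G := by
        gcongr
        · exact inv_inv_add_le_quadBound hP₁ hM G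
        · exact inv_inv_add_le_quadBound hP₂ hM G
    _ = G := by
        rw [← quadBound_smul_add_smul _ _ _ _ hab,
          quadBound_inv_add (convex_setOf_posDef hP₁ hP₂ ha hb hab) hM]

lemma log_det_inv (A : Matrix n n ℝ) : Real.log A⁻¹.det = -Real.log A.det := by
  rw [det_nonsing_inv, Ring.inverse_eq_inv, Real.log_inv]

lemma convexOn_log_det_inv_add {M : Matrix n n ℝ} (hM : M.PosSemidef) :
    ConvexOn ℝ {P : Matrix n n ℝ | P.PosDef} (fun P ↦ Real.log (P⁻¹ + M).det) := by
  refine ⟨convex_setOf_posDef, fun P₁ hP₁ P₂ hP₂ a b ha hb hab ↦ ?_⟩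
  have hG : ∀ {P : Matrix n n ℝ}, P.PosDef → (P⁻¹ + M)⁻¹.PosDef :=
    fun hP ↦ (hP.inv.add_posSemidef hM).inv
  have hcomb := convex_setOf_posDef (hG hP₁) (hG hP₂) ha hb hab
  have key := calc
    a * Real.log (P₁⁻¹ + M)⁻¹.det + b * Real.log (P₂⁻¹ + M)⁻¹.det
        ≤ Real.log (a • (P₁⁻¹ + M)⁻¹ + b • (P₂⁻¹ + M)⁻¹).det :=
          concaveOn_log_det.2 (hG hP₁) (hG hP₂) ha hb hab
    _ ≤ Real.log ((a • P₁ + b • P₂)⁻¹ + M)⁻¹.det :=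
          Real.log_le_log hcomb.det_pos <|
            det_le_det_of_le hcomb ((concaveOn_inv_inv_add hM).2 hP₁ hP₂ ha hb hab)
  simp only [log_det_inv, smul_eq_mul] at key ⊢
  linarith

end Matrix

end LoewnerOrder

/-- For a positive semidefinite `M`, the map `P ↦ log det (P⁻¹ + M)` is convex on the
cone of positive definite matrices. -/
theorem stmt_6 {p : ℕ} (M : Matrix (Fin p) (Fin p) ℝ) (hM : M.PosSemidef) :
    ∀ (P₁ P₂ : Matrix (Fin p) (Fin p) ℝ), P₁.PosDef → P₂.PosDef →
      ∀ t : ℝ, 0 ≤ t → t ≤ 1 →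
        Real.log ((t • P₁ + (1 - t) • P₂)⁻¹ + M).det ≤
          t * Real.log (P₁⁻¹ + M).det + (1 - t) * Real.log (P₂⁻¹ + M).det := by
  intro P₁ P₂ hP₁ hP₂ t ht₀ ht₁
  exact (convexOn_log_det_inv_add hM).2 hP₁ hP₂ ht₀ (sub_nonneg.2 ht₁) (add_sub_cancel t 1)
end

section
/- Let A be a p×p real matrix, Σ a p×p real positive definite matrix, and let P₀, P₁, …, P_n be p×p real positive definite matrices. Set P̄ = (1/(n+1))·∑_{t=0}^{n} P_t. Then (1/(n+1))·∑_{t=0}^{n} [ (1/2)·log det(A·P_t·Aᵀ + Σ) − (1/2)·log det P_t ] ≥ (1/2)·log det(A·P̄·Aᵀ + Σ) − (1/2)·log det P̄. -/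
/-!
With `M = Aᵀ Σ⁻¹ A`, the matrix determinant lemma gives
`log det (A W Aᵀ + Σ) - log det W = log det Σ + log det (M + W⁻¹)`, so it suffices that
`g W = log det (M + W⁻¹)` is convex on positive definite matrices. We show that `g` lies above its
tangent at every `R`: with `Y = M + Q⁻¹`, `N = M + R⁻¹`, `D = Q⁻¹ - R⁻¹`, the inequality
`log det N - log det Y ≤ tr (Y⁻¹ N) - p` (from `log x ≤ x - 1` on eigenvalues) reduces the tangent
inequality to `0 ≤ tr (D N⁻¹ D (Q - Y⁻¹))`, a trace of a product of positive semidefinite matrices.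
Taking `R = P̄`, the tangent terms average to zero.
-/

open Matrix Finset

namespace Matrix

variable {m : Type*} [Fintype m] [DecidableEq m]

lemma PosDef.log_det_le_trace_sub_card {C : Matrix m m ℝ} (hC : C.PosDef) :
    Real.log C.det ≤ C.trace - Fintype.card m := by
  have hH := hC.isHermitian
  rw [hH.det_eq_prod_eigenvalues, hH.trace_eq_sum_eigenvalues]
  simp only [RCLike.ofReal_real_eq_id, id]
  rw [Real.log_prod fun i _ => (hC.eigenvalues_pos i).ne']
  calc ∑ i, Real.log (hH.eigenvalues i) ≤ ∑ i, (hH.eigenvalues i - 1) :=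
        sum_le_sum fun i _ => Real.log_le_sub_one_of_pos (hC.eigenvalues_pos i)
    _ = _ := by simp [sum_sub_distrib]

open scoped MatrixOrder in
lemma PosDef.log_det_sub_log_det_le {Y N : Matrix m m ℝ} (hY : Y.PosDef) (hN : N.PosDef) :
    Real.log N.det - Real.log Y.det ≤ (Y⁻¹ * N).trace - Fintype.card m := by
  set S := CFC.sqrt N
  have hS : S.IsHermitian := (CFC.sqrt_nonneg N).posSemidef.isHermitian
  have hSS : S * S = N := CFC.sqrt_mul_sqrt_self N hN.posSemidef.nonneg
  have hSunit : IsUnit S := (CFC.isUnit_sqrt_iff N).2 hN.isUnit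
  have hC : (S * Y⁻¹ * S).PosDef := by
    have := hSunit.posDef_star_left_conjugate_iff.2 hY.inv
    rwa [star_eq_conjTranspose, hS.eq] at this
  have hdet : (S * Y⁻¹ * S).det = N.det / Y.det := by
    rw [← hSS, det_mul, det_mul, det_mul, det_nonsing_inv, Ring.inverse_eq_inv']
    ring
  have htr : (S * Y⁻¹ * S).trace = (Y⁻¹ * N).trace := by
    rw [trace_mul_cycle, hSS, trace_mul_comm]
  have := hC.log_det_le_trace_sub_card
  rwa [hdet, htr, Real.log_div hN.det_pos.ne' hY.det_pos.ne'] at this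

open scoped MatrixOrder in
lemma PosSemidef.trace_mul_nonneg {A B : Matrix m m ℝ} (hA : A.PosSemidef)
    (hB : B.PosSemidef) : 0 ≤ (A * B).trace := by
  set S := CFC.sqrt B
  have hS : S.IsHermitian := (CFC.sqrt_nonneg B).posSemidef.isHermitian
  have hSS : S * S = B := CFC.sqrt_mul_sqrt_self B hB.nonneg
  calc 0 ≤ (Sᴴ * A * S).trace := (hA.conjTranspose_mul_mul_same S).trace_nonneg
    _ = (A * B).trace := by rw [hS.eq, trace_mul_cycle, hSS, trace_mul_comm]

lemma PosSemidef.sub_inv_add_inv {M Q : Matrix m m ℝ} (hM : M.PosSemidef) (hQ : Q.PosDef) :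
    (Q - (M + Q⁻¹)⁻¹).PosSemidef := by
  set Y := M + Q⁻¹
  have hY : Y.PosDef := PosDef.posSemidef_add hM hQ.inv
  have hQQ : Q⁻¹ * Q = 1 := nonsing_inv_mul Q hQ.det_pos.ne'.isUnit
  have hYY : Y * Y⁻¹ = 1 := mul_nonsing_inv Y hY.det_pos.ne'.isUnit
  have hYY' : Y⁻¹ * Y = 1 := nonsing_inv_mul Y hY.det_pos.ne'.isUnit
  have hMQY : M * Q * Y = M * Q * M + M := by
    rw [mul_add, mul_assoc M Q Q⁻¹, mul_nonsing_inv Q hQ.det_pos.ne'.isUnit, mul_one]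
  have hMQ : Q - Y⁻¹ = Y⁻¹ * (M * Q) :=
    calc Q - Y⁻¹ = Y⁻¹ * (Y * Q) - Y⁻¹ := by rw [← mul_assoc, hYY', one_mul]
      _ = Y⁻¹ * (M * Q) := by rw [add_mul, hQQ, mul_add, mul_one, add_sub_cancel_right]
  have hconj : Q - Y⁻¹ = Y⁻¹ᴴ * (M * Q * M + M) * Y⁻¹ := by
    rw [hY.inv.isHermitian.eq, ← hMQY, hMQ, mul_assoc, mul_assoc, mul_assoc, hYY, mul_one]
  have hMQM : (M * Q * M).PosSemidef := by
    have := hQ.posSemidef.conjTranspose_mul_mul_same M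
    rwa [hM.isHermitian.eq] at this
  rw [hconj]
  exact (hMQM.add hM).conjTranspose_mul_mul_same Y⁻¹

lemma log_det_add_inv_add_trace_le {M Q R : Matrix m m ℝ} (hM : M.PosSemidef) (hQ : Q.PosDef)
    (hR : R.PosDef) :
    Real.log (M + R⁻¹).det + ((M + R⁻¹)⁻¹ * (R⁻¹ * (R - Q) * R⁻¹)).trace ≤
      Real.log (M + Q⁻¹).det := by
  set Y := M + Q⁻¹
  set N := M + R⁻¹
  set D := Q⁻¹ - R⁻¹
  have hY : Y.PosDef := PosDef.posSemidef_add hM hQ.inv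
  have hN : N.PosDef := PosDef.posSemidef_add hM hR.inv
  have hYN : Y - N = D := by simp only [Y, N, D]; abel
  have hQQ : Q⁻¹ * Q = 1 := nonsing_inv_mul Q hQ.det_pos.ne'.isUnit
  have hQQ' : Q * Q⁻¹ = 1 := mul_nonsing_inv Q hQ.det_pos.ne'.isUnit
  have hRR : R⁻¹ * R = 1 := nonsing_inv_mul R hR.det_pos.ne'.isUnit
  have hYY : Y * Y⁻¹ = 1 := mul_nonsing_inv Y hY.det_pos.ne'.isUnit
  have hYY' : Y⁻¹ * Y = 1 := nonsing_inv_mul Y hY.det_pos.ne'.isUnit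
  have hNN : N⁻¹ * N = 1 := nonsing_inv_mul N hN.det_pos.ne'.isUnit
  have hdirection : R⁻¹ * (R - Q) * R⁻¹ = R⁻¹ * Q * D := by
    simp only [D, mul_sub, sub_mul, hRR, mul_assoc, hQQ', mul_one, one_mul]
  have hgap : Y⁻¹ - N⁻¹ * R⁻¹ * Q = N⁻¹ * D * (Q - Y⁻¹) := by
    have hDQ : D * Q = 1 - R⁻¹ * Q := by rw [sub_mul, hQQ]
    have hDY : D * Y⁻¹ = 1 - N * Y⁻¹ := by rw [← hYN, sub_mul, hYY]
    rw [mul_assoc N⁻¹ D, mul_sub, hDQ, hDY, sub_sub_sub_cancel_left, mul_sub, ← mul_assoc N⁻¹ N,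
      hNN, one_mul, mul_assoc N⁻¹ R⁻¹]
  have hDND : (D * N⁻¹ * D).PosSemidef := by
    have hD : Dᴴ = D := by
      rw [conjTranspose_sub, hQ.inv.isHermitian.eq, hR.inv.isHermitian.eq]
    simpa only [hD] using hN.inv.posSemidef.conjTranspose_mul_mul_same D
  have htrace : (Y⁻¹ * D).trace - (N⁻¹ * (R⁻¹ * (R - Q) * R⁻¹)).trace =
      (D * N⁻¹ * D * (Q - Y⁻¹)).trace := by
    rw [← trace_sub, hdirection, ← mul_assoc, ← mul_assoc, ← sub_mul, hgap, trace_mul_comm]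
    simp only [mul_assoc]
  have hYD : (Y⁻¹ * D).trace = Fintype.card m - (Y⁻¹ * N).trace := by
    rw [← hYN, mul_sub, hYY', trace_sub, trace_one]
  have hgap_nonneg := hDND.trace_mul_nonneg (hM.sub_inv_add_inv hQ)
  have hlog := hY.log_det_sub_log_det_le hN
  linarith

lemma card_mul_log_det_add_inv_mean_le {ι : Type*} {s : Finset ι} (hs : s.Nonempty)
    {M : Matrix m m ℝ} (hM : M.PosSemidef) {P : ι → Matrix m m ℝ}
    (hP : ∀ i ∈ s, (P i).PosDef) :
    #s * Real.log (M + ((#s : ℝ)⁻¹ • ∑ i ∈ s, P i)⁻¹).det ≤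
      ∑ i ∈ s, Real.log (M + (P i)⁻¹).det := by
  set R := (#s : ℝ)⁻¹ • ∑ i ∈ s, P i
  have hcard : (0 : ℝ) < #s := by exact_mod_cast hs.card_pos
  have hR : R.PosDef := (posDef_sum hs hP).smul (inv_pos.2 hcard)
  have hbalance : ∑ i ∈ s, (R - P i) = 0 := by
    rw [sum_sub_distrib, sum_const, ← Nat.cast_smul_eq_nsmul ℝ, smul_smul,
      mul_inv_cancel₀ hcard.ne', one_smul, sub_self]
  have htangents : ∑ i ∈ s, ((M + R⁻¹)⁻¹ * (R⁻¹ * (R - P i) * R⁻¹)).trace = 0 := by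
    rw [← trace_sum, ← mul_sum, ← sum_mul, ← mul_sum, hbalance, mul_zero, zero_mul, mul_zero,
      trace_zero]
  calc #s * Real.log (M + R⁻¹).det
      = ∑ i ∈ s, (Real.log (M + R⁻¹).det + ((M + R⁻¹)⁻¹ * (R⁻¹ * (R - P i) * R⁻¹)).trace) := by
        rw [sum_add_distrib, htangents, sum_const, nsmul_eq_mul, add_zero]
    _ ≤ _ := sum_le_sum fun i hi => log_det_add_inv_add_trace_le hM (hP i hi) hR

lemma det_mul_mul_transpose_add {k α : Type*} [Fintype k] [DecidableEq k] [CommRing α]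
    (A : Matrix k m α) {W : Matrix m m α} {S : Matrix k k α} (hW : IsUnit W.det)
    (hS : IsUnit S.det) :
    (A * W * Aᵀ + S).det = S.det * (Aᵀ * S⁻¹ * A + W⁻¹).det * W.det := by
  rw [add_comm, det_add_mul _ _ hS, mul_assoc, ← det_mul, add_mul, nonsing_inv_mul W hW]
  simp only [Matrix.mul_assoc, add_comm]

end Matrix

/-- Jensen-type inequality: the average of `(1/2)·log det(A·P_t·Aᵀ + Σ) − (1/2)·log det P_t`
over `t = 0, …, n` is at least the same expression evaluated at the average
`P̄ = (1/(n+1))·∑ P_t`, for positive definite `P_t` and `Σ`. -/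
theorem stmt_7 {p : ℕ} (n : ℕ) (A Sw : Matrix (Fin p) (Fin p) ℝ) (hSw : Sw.PosDef)
    (P : ℕ → Matrix (Fin p) (Fin p) ℝ) (hP : ∀ t ≤ n, (P t).PosDef)
    (Pbar : Matrix (Fin p) (Fin p) ℝ)
    (hPbar : Pbar = ((n : ℝ) + 1)⁻¹ • ∑ t ∈ Finset.range (n + 1), P t) :
    ((n : ℝ) + 1)⁻¹ *
        ∑ t ∈ Finset.range (n + 1),
          ((1 / 2) * Real.log (A * P t * Aᵀ + Sw).det - (1 / 2) * Real.log (P t).det) ≥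
      (1 / 2) * Real.log (A * Pbar * Aᵀ + Sw).det - (1 / 2) * Real.log Pbar.det := by
  have hs : (range (n + 1)).Nonempty := nonempty_range_add_one
  have hPs : ∀ t ∈ range (n + 1), (P t).PosDef := fun t ht => hP t (mem_range_succ_iff.mp ht)
  have hPbar_pd : Pbar.PosDef := hPbar ▸ (posDef_sum hs hPs).smul (by positivity)
  set M := Aᵀ * Sw⁻¹ * A
  have hM : M.PosSemidef := by
    simpa using hSw.inv.posSemidef.conjTranspose_mul_mul_same A
  have hsplit : ∀ W : Matrix (Fin p) (Fin p) ℝ, W.PosDef →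
      1 / 2 * Real.log (A * W * Aᵀ + Sw).det - 1 / 2 * Real.log W.det =
        1 / 2 * (Real.log Sw.det + Real.log (M + W⁻¹).det) := by
    intro W hW
    have hMW : 0 < (M + W⁻¹).det := (PosDef.posSemidef_add hM hW.inv).det_pos
    rw [det_mul_mul_transpose_add A hW.det_pos.ne'.isUnit hSw.det_pos.ne'.isUnit,
      Real.log_mul (mul_pos hSw.det_pos hMW).ne' hW.det_pos.ne',
      Real.log_mul hSw.det_pos.ne' hMW.ne']
    ring
  have hjensen := card_mul_log_det_add_inv_mean_le hs hM hPs
  rw [card_range, Nat.cast_add_one, ← hPbar] at hjensen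
  rw [sum_congr rfl fun t ht => hsplit (P t) (hPs t ht), hsplit Pbar hPbar_pd, ← mul_sum,
    sum_add_distrib, sum_const, card_range, nsmul_eq_mul, Nat.cast_add_one, ge_iff_le,
    inv_mul_eq_div, le_div_iff₀ (by positivity)]
  linarith
end

section
/- Let A be a p×p real matrix, Σ a p×p real positive semidefinite matrix, and let P₀, P₁, …, P_n be p×p real positive semidefinite matrices satisfying P_t ⪯ A·P_{t−1}·Aᵀ + Σ for every t = 1, …, n. Set P̄ = (1/(n+1))·∑_{t=0}^{n} P_t. Then P̄ ⪯ A·P̄·Aᵀ + Σ + (1/(n+1))·P₀. -/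
/-!
Summing `P_{t+1} ⪯ A P_t Aᵀ + Σ` over `t < n` telescopes into
`∑_{t ≤ n} P_t ⪯ P₀ + A (∑_{t < n} P_t) Aᵀ + n Σ`; adding the positive terms `A P_n Aᵀ` and `Σ`
on the right completes both sums, and dividing by `n + 1` gives the bound. Only additivity and
positivity of `X ↦ A X Aᵀ` enter, so the argument runs in any ordered module.
-/

open Matrix Finset

section OrderedModule

variable {𝕜 M : Type*} [AddCommGroup M] [PartialOrder M] [IsOrderedAddMonoid M]

theorem sum_range_succ_le_map_sum_add (f : M →+ M) (P : ℕ → M) (S : M) {n : ℕ}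
    (hrec : ∀ t < n, P (t + 1) ≤ f (P t) + S) (hS : 0 ≤ S) (hfP : 0 ≤ f (P n)) :
    ∑ t ∈ range (n + 1), P t ≤ f (∑ t ∈ range (n + 1), P t) + (n + 1) • S + P 0 := by
  calc ∑ t ∈ range (n + 1), P t
      = ∑ t ∈ range n, P (t + 1) + P 0 := sum_range_succ' P n
    _ ≤ ∑ t ∈ range n, (f (P t) + S) + P 0 := by
      gcongr with t ht
      exact hrec t (mem_range.mp ht)
    _ = f (∑ t ∈ range n, P t) + n • S + P 0 := by
      rw [sum_add_distrib, map_sum, sum_const, card_range]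
    _ ≤ f (∑ t ∈ range n, P t) + f (P n) + (n • S + S) + P 0 := by
      gcongr
      · exact le_add_of_nonneg_right hfP
      · exact le_add_of_nonneg_right hS
    _ = f (∑ t ∈ range (n + 1), P t) + (n + 1) • S + P 0 := by
      rw [sum_range_succ, map_add, succ_nsmul]

variable [Field 𝕜] [LinearOrder 𝕜] [IsStrictOrderedRing 𝕜] [Module 𝕜 M] [PosSMulMono 𝕜 M]

theorem average_le_map_average_add (f : M →ₗ[𝕜] M) (P : ℕ → M) (S : M) {n : ℕ}
    (hrec : ∀ t < n, P (t + 1) ≤ f (P t) + S) (hS : 0 ≤ S) (hfP : 0 ≤ f (P n)) :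
    ((n : 𝕜) + 1)⁻¹ • ∑ t ∈ range (n + 1), P t ≤
      f (((n : 𝕜) + 1)⁻¹ • ∑ t ∈ range (n + 1), P t) + S + ((n : 𝕜) + 1)⁻¹ • P 0 := by
  have hn : (n : 𝕜) + 1 ≠ 0 := by positivity
  calc ((n : 𝕜) + 1)⁻¹ • ∑ t ∈ range (n + 1), P t
      ≤ ((n : 𝕜) + 1)⁻¹ • (f (∑ t ∈ range (n + 1), P t) + (n + 1) • S + P 0) := by
        gcongr
        exact sum_range_succ_le_map_sum_add f.toAddMonoidHom P S hrec hS hfP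
    _ = f (((n : 𝕜) + 1)⁻¹ • ∑ t ∈ range (n + 1), P t) + S + ((n : 𝕜) + 1)⁻¹ • P 0 := by
      rw [smul_add, smul_add, map_smul, ← Nat.cast_smul_eq_nsmul 𝕜, smul_smul, Nat.cast_succ,
        inv_mul_cancel₀ hn, one_smul]

end OrderedModule

open scoped MatrixOrder ComplexOrder in
instance Matrix.instPosSMulMonoReal {n 𝕜 : Type*} [Fintype n] [RCLike 𝕜] :
    PosSMulMono ℝ (Matrix n n 𝕜) :=
  PosSMulMono.of_smul_nonneg fun _ ha _ hb => (hb.posSemidef.smul ha).nonneg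

open scoped MatrixOrder

/-- If `P_t ⪯ A·P_{t−1}·Aᵀ + Σ` for `t = 1, …, n`, then the average
`P̄ = (1/(n+1))·∑ P_t` satisfies `P̄ ⪯ A·P̄·Aᵀ + Σ + (1/(n+1))·P₀`. -/
theorem stmt_8 {p : ℕ} (n : ℕ) (A Sw : Matrix (Fin p) (Fin p) ℝ) (hSw : Sw.PosSemidef)
    (P : ℕ → Matrix (Fin p) (Fin p) ℝ) (hP : ∀ t ≤ n, (P t).PosSemidef)
    (hrec : ∀ t, 1 ≤ t → t ≤ n → (A * P (t - 1) * Aᵀ + Sw - P t).PosSemidef)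
    (Pbar : Matrix (Fin p) (Fin p) ℝ)
    (hPbar : Pbar = ((n : ℝ) + 1)⁻¹ • ∑ t ∈ Finset.range (n + 1), P t) :
    (A * Pbar * Aᵀ + Sw + ((n : ℝ) + 1)⁻¹ • P 0 - Pbar).PosSemidef := by
  subst hPbar
  refine average_le_map_average_add (LinearMap.mulLeftRight ℝ (A, Aᵀ)) P Sw
    (fun t ht => hrec (t + 1) le_add_self ht) hSw.nonneg ?_
  -- over `ℝ`, `star A = Aᴴ` is definitionally `Aᵀ`
  exact star_right_conjugate_nonneg (hP n le_rfl).nonneg A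
end

section
/- Let A be a p×p real matrix (p ≥ 1), Σ a p×p real positive semidefinite matrix, D > 0 a real number, and P a p×p real positive semidefinite matrix with trace(P) ≤ D. Then det(A·P·Aᵀ + Σ) ≤ ( (λ_max(A·Aᵀ)·D + trace(Σ)) / p )^p, where λ_max(A·Aᵀ) denotes the largest eigenvalue of A·Aᵀ. -/
/-!
Both sides are controlled by traces. For positive semidefinite `M`, AM-GM on the eigenvalues gives
`det M ≤ (trace M / p) ^ p`. Since `A Aᵀ` and `Aᵀ A` have the same characteristic polynomial,
`Aᵀ A ≤ λ_max(A Aᵀ) • 1`; writing `P = Bᵀ B`, this gives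
`trace (A P Aᵀ) = trace (B Aᵀ A Bᵀ) ≤ λ_max(A Aᵀ) · trace P`.
-/

open Matrix

/-- The largest eigenvalue of a Hermitian real matrix. -/
noncomputable def eigMax {p : ℕ} (M : Matrix (Fin p) (Fin p) ℝ) (hM : M.IsHermitian) : ℝ :=
  ⨆ i, hM.eigenvalues i

lemma isHermitian_mul_transpose_self_real {p : ℕ} (A : Matrix (Fin p) (Fin p) ℝ) :
    (A * Aᵀ).IsHermitian := by
  rw [← conjTranspose_eq_transpose_of_trivial]
  exact isHermitian_mul_conjTranspose_self A

open Finset in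
theorem Real.prod_le_arith_mean_pow {ι : Type*} (s : Finset ι) {z : ι → ℝ}
    (hz : ∀ i ∈ s, 0 ≤ z i) : ∏ i ∈ s, z i ≤ ((∑ i ∈ s, z i) / #s) ^ #s := by
  rcases s.eq_empty_or_nonempty with rfl | hs
  · simp
  have hcard : (0 : ℝ) < #s := by exact_mod_cast hs.card_pos
  have hprod : 0 ≤ ∏ i ∈ s, z i := prod_nonneg hz
  have amgm := Real.geom_mean_le_arith_mean_weighted s (fun _ ↦ (#s : ℝ)⁻¹) z
    (fun _ _ ↦ by positivity) (by simp [hcard.ne']) hz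
  rw [Real.finsetProd_rpow s z hz, ← mul_sum, inv_mul_eq_div] at amgm
  calc ∏ i ∈ s, z i = ((∏ i ∈ s, z i) ^ (#s : ℝ)⁻¹) ^ #s := by
        rw [← Real.rpow_mul_natCast hprod, inv_mul_cancel₀ hcard.ne', Real.rpow_one]
    _ ≤ ((∑ i ∈ s, z i) / #s) ^ #s := by gcongr

theorem Matrix.PosSemidef.det_le_trace_div_card_pow {n : Type*} [Fintype n] [DecidableEq n]
    {M : Matrix n n ℝ} (hM : M.PosSemidef) :
    M.det ≤ (M.trace / Fintype.card n) ^ Fintype.card n := by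
  rw [hM.1.det_eq_prod_eigenvalues, hM.1.trace_eq_sum_eigenvalues]
  exact Real.prod_le_arith_mean_pow _ fun i _ ↦ hM.eigenvalues_nonneg i

theorem Matrix.PosSemidef.trace_mul_mul_transpose_le {n : Type*} [Fintype n] [DecidableEq n]
    {A P : Matrix n n ℝ} {c : ℝ} (hA : (c • 1 - Aᵀ * A).PosSemidef) (hP : P.PosSemidef) :
    (A * P * Aᵀ).trace ≤ c * P.trace := by
  open scoped MatrixOrder in
  obtain ⟨B, rfl⟩ := CStarAlgebra.nonneg_iff_eq_star_mul_self.mp hP.nonneg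
  have hcycle : (A * (Bᴴ * B) * Aᵀ).trace = (B * (Aᵀ * A) * Bᴴ).trace := by
    rw [trace_mul_cycle, ← mul_assoc, trace_mul_comm, ← mul_assoc, ← mul_assoc]
  have key := (hA.mul_mul_conjTranspose_same B).trace_nonneg
  rw [mul_sub, sub_mul, trace_sub, mul_smul_comm, mul_one, smul_mul_assoc, trace_smul,
    smul_eq_mul, trace_mul_comm] at key
  rw [star_eq_conjTranspose, hcycle]
  linarith

theorem Matrix.IsHermitian.posSemidef_eigMax_smul_one_sub {p : ℕ} {M : Matrix (Fin p) (Fin p) ℝ}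
    (hM : M.IsHermitian) : (eigMax M hM • 1 - M).PosSemidef := by
  open scoped MatrixOrder in
  rw [← Algebra.algebraMap_eq_smul_one, ← le_iff]
  refine le_algebraMap_of_spectrum_le (fun r hr ↦ ?_) hM.isSelfAdjoint
  obtain ⟨i, rfl⟩ := hM.spectrum_real_eq_range_eigenvalues ▸ hr
  exact le_ciSup (Set.finite_range _).bddAbove i

theorem eigMax_mul_transpose_eq {p : ℕ} (A : Matrix (Fin p) (Fin p) ℝ)
    (h₁ : (A * Aᵀ).IsHermitian) (h₂ : (Aᵀ * A).IsHermitian) :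
    eigMax (A * Aᵀ) h₁ = eigMax (Aᵀ * A) h₂ := by
  rw [eigMax, eigMax, (h₁.eigenvalues_eq_eigenvalues_iff h₂).2 (charpoly_mul_comm _ _)]

theorem Matrix.PosSemidef.eigMax_nonneg {p : ℕ} {M : Matrix (Fin p) (Fin p) ℝ}
    (hM : M.PosSemidef) : 0 ≤ eigMax M hM.1 :=
  Real.iSup_nonneg hM.eigenvalues_nonneg

theorem stmt_10_general {p : ℕ} (A Sw P : Matrix (Fin p) (Fin p) ℝ)
    (hSw : Sw.PosSemidef) (D : ℝ)
    (hP : P.PosSemidef) (htr : P.trace ≤ D) :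
    (A * P * Aᵀ + Sw).det ≤
      ((eigMax (A * Aᵀ) (isHermitian_mul_transpose_self_real A) * D + Sw.trace) / (p : ℝ)) ^ p := by
  set l := eigMax (A * Aᵀ) (isHermitian_mul_transpose_self_real A)
  have hl : 0 ≤ l := by
    simpa using (posSemidef_self_mul_conjTranspose A).eigMax_nonneg
  have hAtA : (l • 1 - Aᵀ * A).PosSemidef := by
    have hH : (Aᵀ * A).IsHermitian := by simpa using (posSemidef_conjTranspose_mul_self A).1
    simpa only [l, eigMax_mul_transpose_eq A _ hH] using hH.posSemidef_eigMax_smul_one_sub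
  have hAPAt : (A * P * Aᵀ).PosSemidef := by simpa using hP.mul_mul_conjTranspose_same A
  have hM : (A * P * Aᵀ + Sw).PosSemidef := hAPAt.add hSw
  calc (A * P * Aᵀ + Sw).det ≤ ((A * P * Aᵀ + Sw).trace / p) ^ p := by
        simpa using hM.det_le_trace_div_card_pow
    _ ≤ ((l * D + Sw.trace) / p) ^ p := by
      gcongr
      · exact div_nonneg hM.trace_nonneg p.cast_nonneg
      rw [trace_add]
      gcongr
      calc (A * P * Aᵀ).trace ≤ l * P.trace := hAtA.trace_mul_mul_transpose_le hP
        _ ≤ l * D := by gcongr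

/-- If `trace P ≤ D` with `P ⪰ 0`, `Σ ⪰ 0`, then
`det(A·P·Aᵀ + Σ) ≤ ((λ_max(A·Aᵀ)·D + trace Σ)/p)^p`. -/
theorem stmt_10 {p : ℕ} (hp : 1 ≤ p) (A Sw P : Matrix (Fin p) (Fin p) ℝ)
    (hSw : Sw.PosSemidef) (D : ℝ) (hD : D > 0)
    (hP : P.PosSemidef) (htr : P.trace ≤ D) :
    (A * P * Aᵀ + Sw).det ≤
      ((eigMax (A * Aᵀ) (isHermitian_mul_transpose_self_real A) * D + Sw.trace) / (p : ℝ)) ^ p :=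
  stmt_10_general A Sw P hSw D hP htr
end

section
/- Let p ≥ 1 and n ≥ 0 be integers, A a p×p real matrix, Σ_w and Σ_{x₀} p×p real positive definite matrices, and D > 0. Define δ_n = λ_max(Σ_{x₀})/(n+1) and ε_n = (1/(n+1))·[ (p/2)·log( (λ_max(A·Aᵀ)·D + trace(Σ_w)) / p ) − (1/2)·log det Σ_{x₀} ]. Define F_n(D) as the infimum of (1/(n+1))·[ (1/2)·log det Σ_{x₀} − (1/2)·log det P₀ + ∑_{t=1}^{n} ( (1/2)·log det(A·P_{t−1}·Aᵀ + Σ_w) − (1/2)·log det P_t ) ] over all tuples (P₀, …, P_n) of p×p positive definite matrices satisfying P₀ ⪯ Σ_{x₀}, P_t ⪯ A·P_{t−1}·Aᵀ + Σ_w for t = 1, …, n, and trace(P_t) ≤ D for all t. Define f(D; ε_n, δ_n) as the infimum of (1/2)·log det(A·P·Aᵀ + Σ_w) − (1/2)·log det P − ε_n over all p×p positive definite matrices P satisfying P ⪯ A·P·Aᵀ + Σ_w + δ_n·I_p and trace(P) ≤ D. Then F_n(D) ≥ f(D; ε_n, δ_n). -/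
/-
Let `P₀, …, P_n` be feasible and `P̄` their average. Summing `P₀ ⪯ Σ_{x₀} ⪯ λ_max(Σ_{x₀}) I` and
`P_t ⪯ A P_{t-1} Aᵀ + Σ_w` gives `P̄ ⪯ A P̄ Aᵀ + Σ_w + δ_n I`, and `trace P̄ ≤ D`, so `P̄` is
feasible for the stationary problem. With `φ(X) = log det (A X Aᵀ + Σ_w) - log det X`, the
objective of the sequence is
`(½ log det Σ_{x₀} + ½ ∑_{t ≤ n} φ(P_t) - ½ log det (A P_n Aᵀ + Σ_w)) / (n + 1)`.
Since `φ(X) = log det Σ_w + log det (X⁻¹ + Aᵀ Σ_w⁻¹ A)`, where `X ↦ (X⁻¹ + B)⁻¹` is operator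
concave and `-log det` is convex and antitone, `φ` is convex and Jensen gives
`∑ φ(P_t) ≥ (n + 1) φ(P̄)`. The remaining term is at most
`(p / 2) log ((λ_max(A Aᵀ) D + trace Σ_w) / p)` by AM-GM on the eigenvalues, which is what `ε_n`
compensates.
-/

open Matrix Finset

open scoped MatrixOrder

theorem Finset.card_mul_le_sum_of_le_add {ι E : Type*} [AddCommGroup E] (s : Finset ι)
    (x : ι → E) (y : E) (hy : s.card • y = ∑ i ∈ s, x i) (f : E → ℝ) (g : E →+ ℝ)
    (h : ∀ i ∈ s, f y + g (x i - y) ≤ f (x i)) :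
    s.card * f y ≤ ∑ i ∈ s, f (x i) :=
  calc s.card * f y = ∑ i ∈ s, (f y + g (x i - y)) := by
        rw [sum_add_distrib, ← map_sum, sum_sub_distrib, ← hy, sum_const, sum_const, sub_self,
          map_zero, nsmul_eq_mul, add_zero]
    _ ≤ ∑ i ∈ s, f (x i) := sum_le_sum h

theorem Finset.sum_Icc_one_sub_eq_sum_range_sub {G : Type*} [AddCommGroup G] (a b : ℕ → G)
    (n : ℕ) :
    ∑ t ∈ Icc 1 n, (a (t - 1) - b t) = ∑ t ∈ range (n + 1), (a t - b t) - a n + b 0 := by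
  induction n with
  | zero => simp
  | succ n ih =>
    rw [sum_Icc_succ_top (by omega), ih, sum_range_succ _ (n + 1), Nat.add_sub_cancel]
    abel

theorem Finset.sum_range_succ_le_add_sum {α : Type*} [AddCommMonoid α] [PartialOrder α]
    [IsOrderedAddMonoid α] {x y : ℕ → α} {c : α} {n : ℕ} (h0 : x 0 ≤ c)
    (hstep : ∀ t < n, x (t + 1) ≤ y t) (hy : 0 ≤ y n) :
    ∑ t ∈ range (n + 1), x t ≤ c + ∑ t ∈ range (n + 1), y t :=
  calc ∑ t ∈ range (n + 1), x t = ∑ t ∈ range n, x (t + 1) + x 0 := sum_range_succ' _ _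
    _ ≤ ∑ t ∈ range n, y t + c :=
        add_le_add (sum_le_sum fun t ht => hstep t (mem_range.mp ht)) h0
    _ ≤ ∑ t ∈ range n, y t + y n + c := by gcongr; exact le_add_of_nonneg_right hy
    _ = c + ∑ t ∈ range (n + 1), y t := by rw [sum_range_succ, add_comm]

namespace Matrix

theorem det_mul_mul_add {R m n : Type*} [CommRing R] [Fintype m] [DecidableEq m]
    [Fintype n] [DecidableEq n] (A : Matrix m n R) (C : Matrix n m R) {X : Matrix n n R}
    {W : Matrix m m R} (hX : IsUnit X.det) (hW : IsUnit W.det) :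
    (A * X * C + W).det = W.det * X.det * (X⁻¹ + C * W⁻¹ * A).det := by
  rw [add_comm, Matrix.mul_assoc, det_add_mul _ _ hW]
  have : 1 + X * C * W⁻¹ * A = X * (X⁻¹ + C * W⁻¹ * A) := by
    rw [Matrix.mul_add, mul_nonsing_inv X hX]
    simp only [Matrix.mul_assoc]
  rw [this, det_mul]
  ring

section LogDet

variable {n : Type*} [Fintype n] [DecidableEq n]

theorem log_det_le_trace_sub_card {M : Matrix n n ℝ} (hM : M.PosDef) :
    Real.log M.det ≤ M.trace - Fintype.card n := by
  have hpos := hM.eigenvalues_pos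
  rw [hM.1.det_eq_prod_eigenvalues, hM.1.trace_eq_sum_eigenvalues]
  simp only [RCLike.ofReal_real_eq_id, id]
  rw [Real.log_prod fun i _ => (hpos i).ne', card_univ.symm, ← nsmul_one, ← sum_const,
    ← sum_sub_distrib]
  exact sum_le_sum fun i _ => Real.log_le_sub_one_of_pos (hpos i)

theorem log_det_le_log_det_add_trace {X Y : Matrix n n ℝ} (hX : X.PosDef) (hY : Y.PosDef) :
    Real.log X.det ≤ Real.log Y.det + (Y⁻¹ * X).trace - Fintype.card n := by
  set R := CFC.sqrt Y⁻¹
  have hRR : R * R = Y⁻¹ := CFC.sqrt_mul_sqrt_self _ hY.inv.posSemidef.nonneg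
  have hRu : IsUnit R := (CFC.isUnit_sqrt_iff _ hY.inv.posSemidef.nonneg).mpr hY.inv.isUnit
  have hR : star R = R := (CFC.sqrt_nonneg Y⁻¹).posSemidef.1
  have hZ : (star R * X * R).PosDef := (IsUnit.posDef_star_left_conjugate_iff hRu).mpr hX
  have hdet : (star R * X * R).det = X.det / Y.det := by
    rw [hR, det_mul, det_mul, mul_right_comm, ← det_mul, hRR, det_nonsing_inv,
      Ring.inverse_eq_inv, div_eq_inv_mul]
  have htr : (star R * X * R).trace = (Y⁻¹ * X).trace := by
    rw [hR, trace_mul_comm, ← Matrix.mul_assoc, hRR]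
  have := log_det_le_trace_sub_card hZ
  rw [hdet, htr, Real.log_div hX.det_pos.ne' hY.det_pos.ne'] at this
  linarith

theorem log_det_le_card_mul_log_of_trace_le {M : Matrix n n ℝ} (hM : M.PosDef) {s : ℝ}
    (hs : M.trace ≤ s) : Real.log M.det ≤ Fintype.card n * Real.log (s / Fintype.card n) := by
  rcases isEmpty_or_nonempty n with hn | hn
  · simp
  have hcard : (0 : ℝ) < Fintype.card n := by exact_mod_cast Fintype.card_pos
  have hs0 : 0 < s := hM.trace_pos.trans_le hs
  have hc : 0 < s / Fintype.card n := div_pos hs0 hcard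
  have := log_det_le_trace_sub_card (hM.smul (inv_pos.mpr hc))
  rw [det_smul, trace_smul, smul_eq_mul, Real.log_mul (by positivity) hM.det_pos.ne',
    Real.log_pow, Real.log_inv] at this
  have hs' : (s / Fintype.card n)⁻¹ * M.trace ≤ Fintype.card n :=
    calc (s / Fintype.card n)⁻¹ * M.trace ≤ (s / Fintype.card n)⁻¹ * s := by gcongr
      _ = Fintype.card n := by field_simp [hs0.ne']
  linarith

theorem trace_mul_le_trace_mul_of_le {M S T : Matrix n n ℝ} (hM : M.PosSemidef)
    (hST : S ≤ T) : (M * S).trace ≤ (M * T).trace := by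
  set R := CFC.sqrt M
  have hRR : R * R = M := CFC.sqrt_mul_sqrt_self M hM.nonneg
  have hle : R * S * R ≤ R * T * R := conjugate_le_conjugate_of_nonneg hST (CFC.sqrt_nonneg M)
  have htr : ∀ U : Matrix n n ℝ, (M * U).trace = (R * U * R).trace := fun U => by
    rw [← hRR, Matrix.mul_assoc, trace_mul_comm, Matrix.mul_assoc]
  rw [htr, htr, ← sub_nonneg, ← trace_sub]
  exact (sub_nonneg.mpr hle).posSemidef.trace_nonneg

/-- The right-hand side is the first-order expansion at `Y` of the operator concave map
`X ↦ (X⁻¹ + B)⁻¹`. -/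
theorem inv_add_le {X Y B : Matrix n n ℝ} (hX : X.PosDef) (hY : Y.PosDef)
    (hB : B.PosSemidef) :
    (X⁻¹ + B)⁻¹ ≤
      (Y⁻¹ + B)⁻¹ * Y⁻¹ * X * Y⁻¹ * (Y⁻¹ + B)⁻¹ + (Y⁻¹ + B)⁻¹ * B * (Y⁻¹ + B)⁻¹ := by
  have hN : (X⁻¹ + B).PosDef := hX.inv.add_posSemidef hB
  have hM : (Y⁻¹ + B).PosDef := hY.inv.add_posSemidef hB
  have hsq₁ := hX.posSemidef.conjTranspose_mul_mul_same
    (X⁻¹ * (X⁻¹ + B)⁻¹ - Y⁻¹ * (Y⁻¹ + B)⁻¹)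
  have hsq₂ := hB.conjTranspose_mul_mul_same ((X⁻¹ + B)⁻¹ - (Y⁻¹ + B)⁻¹)
  simp only [conjTranspose_sub, conjTranspose_mul, hX.inv.1.eq, hY.inv.1.eq, hN.inv.1.eq,
    hM.inv.1.eq] at hsq₁ hsq₂
  have hXX : X⁻¹ * X = 1 := nonsing_inv_mul X hX.det_pos.ne'.isUnit
  have hXX' : X * X⁻¹ = 1 := mul_nonsing_inv X hX.det_pos.ne'.isUnit
  have hNN : (X⁻¹ + B) * (X⁻¹ + B)⁻¹ = 1 := mul_nonsing_inv _ hN.det_pos.ne'.isUnit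
  have hMM : (Y⁻¹ + B)⁻¹ * (Y⁻¹ + B) = 1 := nonsing_inv_mul _ hM.det_pos.ne'.isUnit
  have hMM' : (Y⁻¹ + B) * (Y⁻¹ + B)⁻¹ = 1 := mul_nonsing_inv _ hM.det_pos.ne'.isUnit
  have key : (Y⁻¹ + B)⁻¹ * Y⁻¹ * X * Y⁻¹ * (Y⁻¹ + B)⁻¹ + (Y⁻¹ + B)⁻¹ * B * (Y⁻¹ + B)⁻¹
      - (X⁻¹ + B)⁻¹ =
        ((X⁻¹ + B)⁻¹ * X⁻¹ - (Y⁻¹ + B)⁻¹ * Y⁻¹) * X *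
            (X⁻¹ * (X⁻¹ + B)⁻¹ - Y⁻¹ * (Y⁻¹ + B)⁻¹) +
          ((X⁻¹ + B)⁻¹ - (Y⁻¹ + B)⁻¹) * B * ((X⁻¹ + B)⁻¹ - (Y⁻¹ + B)⁻¹) := by
    generalize (X⁻¹ + B)⁻¹ = N' at *
    generalize (Y⁻¹ + B)⁻¹ = M' at *
    calc _ = N' * ((X⁻¹ + B) * N') - N' * ((Y⁻¹ + B) * M') - (M' * (Y⁻¹ + B)) * N'
          + (M' * Y⁻¹ * X * Y⁻¹ * M' + M' * B * M') := by
          rw [hNN, hMM, hMM']; noncomm_ring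
      _ = N' * (X⁻¹ * X) * X⁻¹ * N' - N' * (X⁻¹ * X) * Y⁻¹ * M' - M' * Y⁻¹ * (X * X⁻¹) * N'
          + M' * Y⁻¹ * X * Y⁻¹ * M' + N' * B * N' - N' * B * M' - M' * B * N'
          + M' * B * M' := by
          rw [hXX, hXX']; noncomm_ring
      _ = _ := by noncomm_ring
  rw [le_iff, key]
  exact hsq₁.add hsq₂

theorem log_det_inv_add_sub_trace_le {X Y B : Matrix n n ℝ} (hX : X.PosDef) (hY : Y.PosDef)
    (hB : B.PosSemidef) :
    Real.log (Y⁻¹ + B).det - (Y⁻¹ * (Y⁻¹ + B)⁻¹ * Y⁻¹ * (X - Y)).trace ≤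
      Real.log (X⁻¹ + B).det := by
  have hN : (X⁻¹ + B).PosDef := hX.inv.add_posSemidef hB
  have hM : (Y⁻¹ + B).PosDef := hY.inv.add_posSemidef hB
  set M := Y⁻¹ + B
  have hMM : M * M⁻¹ = 1 := mul_nonsing_inv M hM.det_pos.ne'.isUnit
  have hYY : Y⁻¹ * Y = 1 := nonsing_inv_mul Y hY.det_pos.ne'.isUnit
  have hklein := log_det_le_log_det_add_trace hN.inv hM.inv
  rw [nonsing_inv_nonsing_inv M hM.det_pos.ne'.isUnit] at hklein
  have hmono := trace_mul_le_trace_mul_of_le hM.posSemidef (inv_add_le hX hY hB)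
  have hlog : ∀ Z : Matrix n n ℝ, Real.log Z⁻¹.det = -Real.log Z.det := fun Z => by
    rw [det_nonsing_inv, Ring.inverse_eq_inv', Real.log_inv]
  have hcard : (Fintype.card n : ℝ) = (Y⁻¹ * M⁻¹).trace + (B * M⁻¹).trace := by
    rw [← trace_add, ← add_mul, ← trace_one, ← hMM]
  have hrhs : (M * (M⁻¹ * Y⁻¹ * X * Y⁻¹ * M⁻¹ + M⁻¹ * B * M⁻¹)).trace
      = (Y⁻¹ * M⁻¹ * Y⁻¹ * X).trace + (B * M⁻¹).trace := by
    rw [Matrix.mul_add, trace_add]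
    simp only [← Matrix.mul_assoc, hMM, Matrix.one_mul]
    rw [Matrix.mul_assoc (Y⁻¹ * X), trace_mul_comm (Y⁻¹ * X)]
    simp only [Matrix.mul_assoc]
  have hgrad : (Y⁻¹ * M⁻¹ * Y⁻¹ * (X - Y)).trace
      = (Y⁻¹ * M⁻¹ * Y⁻¹ * X).trace - (Y⁻¹ * M⁻¹).trace := by
    rw [Matrix.mul_sub, trace_sub, Matrix.mul_assoc _ Y⁻¹ Y, hYY, Matrix.mul_one]
  rw [hlog, hlog] at hklein
  linarith

end LogDet

section LogDetRatio

variable {m n : Type*} [Fintype m] [DecidableEq m] [Fintype n] [DecidableEq n]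

theorem log_det_mul_mul_transpose_add_sub_log_det (A : Matrix m n ℝ) {X : Matrix n n ℝ}
    {W : Matrix m m ℝ} (hX : X.PosDef) (hW : W.PosDef) :
    Real.log (A * X * Aᵀ + W).det - Real.log X.det =
      Real.log W.det + Real.log (X⁻¹ + Aᵀ * W⁻¹ * A).det := by
  have hB : (X⁻¹ + Aᵀ * W⁻¹ * A).PosDef := by
    refine hX.inv.add_posSemidef ?_
    simpa using hW.inv.posSemidef.conjTranspose_mul_mul_same A
  rw [det_mul_mul_add A Aᵀ hX.det_pos.ne'.isUnit hW.det_pos.ne'.isUnit,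
    Real.log_mul (by positivity [hW.det_pos, hX.det_pos]) hB.det_pos.ne',
    Real.log_mul hW.det_pos.ne' hX.det_pos.ne']
  ring

theorem log_det_ratio_sub_trace_le (A : Matrix m n ℝ) {X Y : Matrix n n ℝ} {W : Matrix m m ℝ}
    (hX : X.PosDef) (hY : Y.PosDef) (hW : W.PosDef) :
    Real.log (A * Y * Aᵀ + W).det - Real.log Y.det
        - (Y⁻¹ * (Y⁻¹ + Aᵀ * W⁻¹ * A)⁻¹ * Y⁻¹ * (X - Y)).trace ≤
      Real.log (A * X * Aᵀ + W).det - Real.log X.det := by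
  have hB : (Aᵀ * W⁻¹ * A).PosSemidef := by
    simpa using hW.inv.posSemidef.conjTranspose_mul_mul_same A
  rw [log_det_mul_mul_transpose_add_sub_log_det A hX hW,
    log_det_mul_mul_transpose_add_sub_log_det A hY hW]
  linarith [log_det_inv_add_sub_trace_le hX hY hB]

theorem card_mul_log_det_ratio_le_sum (A : Matrix m n ℝ) {W : Matrix m m ℝ} (hW : W.PosDef)
    {ι : Type*} {s : Finset ι} (hs : s.Nonempty) {P : ι → Matrix n n ℝ}
    (hP : ∀ i ∈ s, (P i).PosDef) {Y : Matrix n n ℝ}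
    (hY : Y = (s.card : ℝ)⁻¹ • ∑ i ∈ s, P i) :
    s.card * (Real.log (A * Y * Aᵀ + W).det - Real.log Y.det) ≤
      ∑ i ∈ s, (Real.log (A * P i * Aᵀ + W).det - Real.log (P i).det) := by
  have hcard : (0 : ℝ) < s.card := by exact_mod_cast hs.card_pos
  have hsum : s.card • Y = ∑ i ∈ s, P i := by
    rw [hY, ← Nat.cast_smul_eq_nsmul ℝ, smul_smul, mul_inv_cancel₀ hcard.ne', one_smul]
  replace hY : Y.PosDef := hY ▸ (posDef_sum hs hP).smul (inv_pos.mpr hcard)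
  set Γ := Y⁻¹ * (Y⁻¹ + Aᵀ * W⁻¹ * A)⁻¹ * Y⁻¹
  exact card_mul_le_sum_of_le_add s P Y hsum
    (fun X => Real.log (A * X * Aᵀ + W).det - Real.log X.det)
    (-(traceAddMonoidHom n ℝ).comp (AddMonoidHom.mulLeft Γ))
    fun i hi => by simpa [sub_eq_add_neg] using log_det_ratio_sub_trace_le A (hP i hi) hY hW

end LogDetRatio

section Average

variable {n : Type*} [Fintype n]

theorem average_le_mul_mul_transpose_add (A W C : Matrix n n ℝ) {P : ℕ → Matrix n n ℝ}
    {N : ℕ} (h0 : P 0 ≤ C) (hstep : ∀ t < N, P (t + 1) ≤ A * P t * Aᵀ + W)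
    (hN : 0 ≤ A * P N * Aᵀ + W) {Y : Matrix n n ℝ}
    (hY : Y = ((N : ℝ) + 1)⁻¹ • ∑ t ∈ range (N + 1), P t) :
    Y ≤ A * Y * Aᵀ + W + ((N : ℝ) + 1)⁻¹ • C := by
  have hN' : ((N : ℝ) + 1) ≠ 0 := by positivity
  calc Y ≤ ((N : ℝ) + 1)⁻¹ • (C + ∑ t ∈ range (N + 1), (A * P t * Aᵀ + W)) :=
        hY ▸ smul_le_smul_of_nonneg_left (sum_range_succ_le_add_sum h0 hstep hN) (by positivity)
    _ = A * Y * Aᵀ + W + ((N : ℝ) + 1)⁻¹ • C := by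
        rw [sum_add_distrib, ← sum_mul, ← mul_sum, sum_const, card_range, hY]
        simp only [smul_add, Matrix.mul_smul, Matrix.smul_mul, smul_smul,
          ← Nat.cast_smul_eq_nsmul ℝ]
        push_cast
        rw [inv_mul_cancel₀ hN', one_smul]
        abel

theorem trace_average_le {P : ℕ → Matrix n n ℝ} {N : ℕ} {D : ℝ}
    (h : ∀ t ≤ N, (P t).trace ≤ D) :
    (((N : ℝ) + 1)⁻¹ • ∑ t ∈ range (N + 1), P t).trace ≤ D := by
  rw [trace_smul, trace_sum, smul_eq_mul, inv_mul_le_iff₀ (by positivity)]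
  calc ∑ t ∈ range (N + 1), (P t).trace ≤ ∑ t ∈ range (N + 1), D :=
        sum_le_sum fun t ht => h t (Nat.lt_succ_iff.mp (mem_range.mp ht))
    _ = (N + 1) * D := by simp

end Average

section EigMax

variable {p : ℕ}

theorem le_eigMax_of_mem_spectrum {M : Matrix (Fin p) (Fin p) ℝ} (hM : M.IsHermitian)
    {x : ℝ} (hx : x ∈ spectrum ℝ M) : x ≤ eigMax M hM := by
  obtain ⟨i, rfl⟩ := hM.spectrum_real_eq_range_eigenvalues ▸ hx
  exact le_ciSup (Set.finite_range _).bddAbove i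

theorem le_eigMax_smul_one {M : Matrix (Fin p) (Fin p) ℝ} (hM : M.IsHermitian) :
    M ≤ eigMax M hM • 1 := by
  rw [← Algebra.algebraMap_eq_smul_one]
  exact le_algebraMap_of_spectrum_le fun x => le_eigMax_of_mem_spectrum hM

theorem eigMax_nonneg {M : Matrix (Fin p) (Fin p) ℝ} (hM : M.PosSemidef) : 0 ≤ eigMax M hM.1 :=
  Real.iSup_nonneg hM.eigenvalues_nonneg

theorem transpose_mul_self_le_eigMax_smul_one (A : Matrix (Fin p) (Fin p) ℝ) :
    Aᵀ * A ≤ eigMax (A * Aᵀ) (isHermitian_mul_transpose_self_real A) • 1 := by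
  have hAAt : (A * Aᵀ).PosSemidef := by simpa using posSemidef_self_mul_conjTranspose A
  have hAtA : (Aᵀ * A).PosSemidef := by simpa using posSemidef_conjTranspose_mul_self A
  rw [← Algebra.algebraMap_eq_smul_one]
  refine le_algebraMap_of_spectrum_le (fun x hx => ?_) hAtA.1
  rcases eq_or_ne x 0 with rfl | hx0
  · exact eigMax_nonneg hAAt
  · have hx' : x ∈ spectrum ℝ (A * Aᵀ) \ {0} :=
      spectrum.nonzero_mul_comm (𝕜 := ℝ) Aᵀ A ▸ ⟨hx, hx0⟩
    exact le_eigMax_of_mem_spectrum _ hx'.1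

theorem trace_mul_mul_transpose_le (A : Matrix (Fin p) (Fin p) ℝ)
    {X : Matrix (Fin p) (Fin p) ℝ} (hX : X.PosSemidef) {D : ℝ} (hD : X.trace ≤ D) :
    (A * X * Aᵀ).trace ≤ eigMax (A * Aᵀ) (isHermitian_mul_transpose_self_real A) * D := by
  have hAAt : (A * Aᵀ).PosSemidef := by simpa using posSemidef_self_mul_conjTranspose A
  calc (A * X * Aᵀ).trace = (X * (Aᵀ * A)).trace := by
        rw [trace_mul_comm, ← Matrix.mul_assoc, trace_mul_comm]
    _ ≤ (X * (eigMax (A * Aᵀ) (isHermitian_mul_transpose_self_real A) • 1)).trace :=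
        trace_mul_le_trace_mul_of_le hX (transpose_mul_self_le_eigMax_smul_one A)
    _ = eigMax (A * Aᵀ) (isHermitian_mul_transpose_self_real A) * X.trace := by
        rw [Matrix.mul_smul, Matrix.mul_one, trace_smul, smul_eq_mul]
    _ ≤ _ := mul_le_mul_of_nonneg_left hD (eigMax_nonneg hAAt)

end EigMax

end Matrix

theorem stmt_12_general {p : ℕ} (n : ℕ)
    (A Sw Sx0 : Matrix (Fin p) (Fin p) ℝ) (hSw : Sw.PosDef) (hSx0 : Sx0.PosDef)
    (D : ℝ)
    (δ ε : ℝ)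
    (hδ : δ = eigMax Sx0 hSx0.1 / ((n : ℝ) + 1))
    (hε : ε = ((n : ℝ) + 1)⁻¹ *
      (((p : ℝ) / 2) *
          Real.log ((eigMax (A * Aᵀ) (isHermitian_mul_transpose_self_real A) * D + Sw.trace) /
            (p : ℝ)) -
        (1 / 2) * Real.log Sx0.det)) :
    sInf {x : EReal | ∃ P : ℕ → Matrix (Fin p) (Fin p) ℝ,
        (∀ t ≤ n, (P t).PosDef) ∧ (Sx0 - P 0).PosSemidef ∧
        (∀ t, 1 ≤ t → t ≤ n → (A * P (t - 1) * Aᵀ + Sw - P t).PosSemidef) ∧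
        (∀ t ≤ n, (P t).trace ≤ D) ∧
        x = (((n : ℝ) + 1)⁻¹ *
          ((1 / 2) * Real.log Sx0.det - (1 / 2) * Real.log (P 0).det +
            ∑ t ∈ Finset.Icc 1 n,
              ((1 / 2) * Real.log (A * P (t - 1) * Aᵀ + Sw).det -
                (1 / 2) * Real.log (P t).det)) : ℝ)} ≥
      sInf {x : EReal | ∃ P : Matrix (Fin p) (Fin p) ℝ, P.PosDef ∧
        (A * P * Aᵀ + Sw + δ • (1 : Matrix (Fin p) (Fin p) ℝ) - P).PosSemidef ∧
        P.trace ≤ D ∧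
        x = ((1 / 2) * Real.log (A * P * Aᵀ + Sw).det - (1 / 2) * Real.log P.det - ε : ℝ)} := by
  refine le_sInf ?_
  rintro _ ⟨P, hPD, hP0, hstep, htr, rfl⟩
  have hn : (0 : ℝ) < n + 1 := by positivity
  have hPD' : ∀ t ∈ range (n + 1), (P t).PosDef :=
    fun t ht => hPD t (Nat.lt_succ_iff.mp (mem_range.mp ht))
  have hQ : ∀ {X : Matrix (Fin p) (Fin p) ℝ}, X.PosSemidef → (A * X * Aᵀ + Sw).PosDef :=
    fun hX => PosDef.posSemidef_add (by simpa using hX.mul_mul_conjTranspose_same A) hSw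
  set Pb := ((n : ℝ) + 1)⁻¹ • ∑ t ∈ range (n + 1), P t
  have hfeas : Pb ≤ A * Pb * Aᵀ + Sw + δ • 1 := by
    rw [hδ, div_eq_inv_mul, ← smul_smul]
    exact average_le_mul_mul_transpose_add A Sw _ ((le_iff.mpr hP0).trans (le_eigMax_smul_one _))
      (fun t _ => le_iff.mpr (by simpa using hstep (t + 1) (by omega) (by omega)))
      (hQ (hPD n le_rfl).posSemidef).posSemidef.nonneg rfl
  refine sInf_le_of_le ⟨Pb, (posDef_sum nonempty_range_add_one hPD').smul (inv_pos.mpr hn),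
    hfeas, trace_average_le htr, rfl⟩ ?_
  have hjensen := card_mul_log_det_ratio_le_sum A hSw nonempty_range_add_one hPD'
    (by simp [Pb] : Pb = _)
  have hlast := log_det_le_card_mul_log_of_trace_le (hQ (hPD n le_rfl).posSemidef)
    (s := eigMax (A * Aᵀ) (isHermitian_mul_transpose_self_real A) * D + Sw.trace)
    (by rw [trace_add]; gcongr
        exact trace_mul_mul_transpose_le A (hPD n le_rfl).posSemidef (htr n le_rfl))
  have hsum := sum_Icc_one_sub_eq_sum_range_sub
    (fun t => Real.log (A * P t * Aᵀ + Sw).det) (fun t => Real.log (P t).det) n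
  simp only [card_range, Nat.cast_add, Nat.cast_one, Fintype.card_fin] at hjensen hlast
  rw [EReal.coe_le_coe_iff, hε, sub_le_iff_le_add, ← mul_add, le_inv_mul_iff₀ hn]
  simp only [← mul_sub, ← mul_sum]
  linarith

/-- The finite-horizon Gaussian SRD value `F_n(D)` is bounded below by the stationary
relaxation `f(D; ε_n, δ_n)` (Lemma 4 of the paper), with infima taken in the extended
reals. -/
theorem stmt_12 {p : ℕ} (hp : 1 ≤ p) (n : ℕ)
    (A Sw Sx0 : Matrix (Fin p) (Fin p) ℝ) (hSw : Sw.PosDef) (hSx0 : Sx0.PosDef)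
    (D : ℝ) (hD : D > 0)
    (δ ε : ℝ)
    (hδ : δ = eigMax Sx0 hSx0.1 / ((n : ℝ) + 1))
    (hε : ε = ((n : ℝ) + 1)⁻¹ *
      (((p : ℝ) / 2) *
          Real.log ((eigMax (A * Aᵀ) (isHermitian_mul_transpose_self_real A) * D + Sw.trace) /
            (p : ℝ)) -
        (1 / 2) * Real.log Sx0.det)) :
    sInf {x : EReal | ∃ P : ℕ → Matrix (Fin p) (Fin p) ℝ,
        (∀ t ≤ n, (P t).PosDef) ∧ (Sx0 - P 0).PosSemidef ∧
        (∀ t, 1 ≤ t → t ≤ n → (A * P (t - 1) * Aᵀ + Sw - P t).PosSemidef) ∧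
        (∀ t ≤ n, (P t).trace ≤ D) ∧
        x = (((n : ℝ) + 1)⁻¹ *
          ((1 / 2) * Real.log Sx0.det - (1 / 2) * Real.log (P 0).det +
            ∑ t ∈ Finset.Icc 1 n,
              ((1 / 2) * Real.log (A * P (t - 1) * Aᵀ + Sw).det -
                (1 / 2) * Real.log (P t).det)) : ℝ)} ≥
      sInf {x : EReal | ∃ P : Matrix (Fin p) (Fin p) ℝ, P.PosDef ∧
        (A * P * Aᵀ + Sw + δ • (1 : Matrix (Fin p) (Fin p) ℝ) - P).PosSemidef ∧
        P.trace ≤ D ∧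
        x = ((1 / 2) * Real.log (A * P * Aᵀ + Sw).det - (1 / 2) * Real.log P.det - ε : ℝ)} :=
  stmt_12_general n A Sw Sx0 hSw hSx0 D δ ε hδ hε
end

section
/- Let p ≥ 1 and n ≥ 0 be integers, A a p×p real matrix, Σ_w and Σ_{x₀} p×p real positive definite matrices, and D > 0. Let c = (1/2)·log det Σ_{x₀} + (n/2)·log det Σ_w. Then the following two infima are equal: (I) the infimum of (1/(n+1))·[ (1/2)·log det Σ_{x₀} − (1/2)·log det P₀ + ∑_{t=1}^{n} ( (1/2)·log det(A·P_{t−1}·Aᵀ + Σ_w) − (1/2)·log det P_t ) ] over all tuples (P₀, …, P_n) of p×p positive definite matrices with P₀ ⪯ Σ_{x₀}, P_t ⪯ A·P_{t−1}·Aᵀ + Σ_w for 1 ≤ t ≤ n, and trace(P_t) ≤ D for all t; and (II) the infimum of (1/(n+1))·( c − ∑_{t=0}^{n} (1/2)·log det Q_t ) over all tuples (P₀, …, P_n, Q₀, …, Q_n) of p×p positive definite matrices subject to the same constraints on the P_t together with Q_n = P_n and, for each t = 0, …, n−1, the 2p×2p block matrix [[P_t − Q_t, P_t·Aᵀ], [A·P_t,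 A·P_t·Aᵀ + Σ_w]] being positive semidefinite. (This identifies the finite-horizon Gaussian SRD optimization with a determinant-maximization / semidefinite program.) -/
/-!
A Schur complement in the positive definite block `A P_t Aᵀ + Sw` turns the block constraint on
`Q_t` into `Q_t ⪯ P_t - P_t Aᵀ (A P_t Aᵀ + Sw)⁻¹ A P_t`, the conditional covariance. As `log det`
is monotone in the Loewner order, for fixed `P` the program (II) is optimised by taking `Q_t`
equal to that bound (and `Q_n = P_n`). Computing the determinant of
`[[P_t, P_t Aᵀ], [A P_t, A P_t Aᵀ + Sw]]` through both diagonal blocks gives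
`det (A P_t Aᵀ + Sw) · det Q_t = det P_t · det Sw`, and with this the objective (II) telescopes
into the objective (I).
-/

open Matrix Finset

namespace Matrix

variable {m k : Type*} [Fintype m] [Fintype k]

/-- The covariance of `x` given `A x + w`, for independent Gaussians `x ~ N(0, P)` and
`w ~ N(0, Sw)`. -/
noncomputable def condCov [DecidableEq k] (A : Matrix k m ℝ) (Sw : Matrix k k ℝ)
    (P : Matrix m m ℝ) : Matrix m m ℝ :=
  P - P * Aᵀ * (A * P * Aᵀ + Sw)⁻¹ * (A * P)

variable {A : Matrix k m ℝ} {Sw : Matrix k k ℝ} {P : Matrix m m ℝ}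

omit [Fintype k] in
lemma IsHermitian.conjTranspose_mul_transpose (hP : P.IsHermitian) : (P * Aᵀ)ᴴ = A * P := by
  rw [conjTranspose_mul, conjTranspose_eq_transpose_of_trivial Aᵀ, transpose_transpose, hP.eq]

lemma PosSemidef.posDef_mul_mul_transpose_add (hP : P.PosSemidef) (hSw : Sw.PosDef) :
    (A * P * Aᵀ + Sw).PosDef := by
  simpa only [conjTranspose_eq_transpose_of_trivial] using
    PosDef.posSemidef_add (hP.mul_mul_conjTranspose_same A) hSw

lemma posSemidef_fromBlocks_iff_posSemidef_condCov_sub [DecidableEq k] (hP : P.PosSemidef)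
    (hSw : Sw.PosDef) (Q : Matrix m m ℝ) :
    (fromBlocks (P - Q) (P * Aᵀ) (A * P) (A * P * Aᵀ + Sw)).PosSemidef ↔
      (condCov A Sw P - Q).PosSemidef := by
  have hS := hP.posDef_mul_mul_transpose_add (A := A) hSw
  have := hS.isUnit.invertible
  have hschur := PosDef.fromBlocks₂₂ (P - Q) (P * Aᵀ) hS
  rwa [hP.1.conjTranspose_mul_transpose, sub_right_comm] at hschur

variable [DecidableEq m]

lemma PosSemidef.one_le_det_one_add_s14 {M : Matrix m m ℝ} (hM : M.PosSemidef) :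
    1 ≤ (1 + M).det := by
  rw [hM.1.spectral_theorem, ← map_one (Unitary.conjStarAlgAut ℝ _ hM.1.eigenvectorUnitary),
    ← map_add, Unitary.conjStarAlgAut_apply, det_mul_comm, ← Matrix.mul_assoc,
    Unitary.coe_star_mul_self, Matrix.one_mul, ← diagonal_one, diagonal_add, det_diagonal]
  exact Finset.one_le_prod fun i _ => by simpa using hM.eigenvalues_nonneg i

open scoped MatrixOrder in
lemma PosDef.det_le_det {A B : Matrix m m ℝ} (hA : A.PosDef) (hAB : (B - A).PosSemidef) :
    A.det ≤ B.det := by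
  set S := CFC.sqrt A
  have hS : S.PosDef := (IsStrictlyPositive.sqrt A hA.isStrictlyPositive).posDef
  have hSS : S * S = A := CFC.sqrt_mul_sqrt_self A hA.posSemidef.nonneg
  have hSdet : IsUnit S.det := hS.isUnit.map detMonoidHom
  have hN : (S⁻¹ * (B - A) * S⁻¹).PosSemidef := by
    simpa only [hS.1.inv.eq] using hAB.mul_mul_conjTranspose_same S⁻¹
  have hB : S * (1 + S⁻¹ * (B - A) * S⁻¹) * S = B := by
    rw [Matrix.mul_add, Matrix.add_mul, Matrix.mul_one, hSS, ← Matrix.mul_assoc S,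
      mul_nonsing_inv_cancel_left S _ hSdet, nonsing_inv_mul_cancel_right S _ hSdet,
      add_sub_cancel]
  calc A.det = S.det * 1 * S.det := by rw [← hSS, det_mul, mul_one]
    _ ≤ S.det * (1 + S⁻¹ * (B - A) * S⁻¹).det * S.det := by
      have := hS.det_pos
      gcongr
      exact hN.one_le_det_one_add_s14
    _ = B.det := by rw [← det_mul, ← det_mul, hB]

lemma PosDef.posSemidef_fromBlocks (hP : P.PosDef) (hSw : Sw.PosDef) :
    (fromBlocks P (P * Aᵀ) (A * P) (A * P * Aᵀ + Sw)).PosSemidef := by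
  have := hP.isUnit.invertible
  have hschur := PosDef.fromBlocks₁₁ (P * Aᵀ) (A * P * Aᵀ + Sw) hP
  rw [hP.1.conjTranspose_mul_transpose, mul_inv_cancel_right_of_invertible, ← Matrix.mul_assoc,
    add_sub_cancel_left] at hschur
  exact hschur.mpr hSw.posSemidef

variable [DecidableEq k]

lemma PosDef.det_mul_det_condCov (hP : P.PosDef) (hSw : Sw.PosDef) :
    (A * P * Aᵀ + Sw).det * (condCov A Sw P).det = P.det * Sw.det := by
  have := hP.isUnit.invertible
  have := (hP.posSemidef.posDef_mul_mul_transpose_add (A := A) hSw).isUnit.invertible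
  rw [condCov, ← invOf_eq_nonsing_inv, ← det_fromBlocks₂₂, det_fromBlocks₁₁, invOf_eq_nonsing_inv,
    mul_inv_cancel_right_of_invertible, ← Matrix.mul_assoc, add_sub_cancel_left]

lemma posDef_condCov (hP : P.PosDef) (hSw : Sw.PosDef) : (condCov A Sw P).PosDef := by
  have hpsd := (posSemidef_fromBlocks_iff_posSemidef_condCov_sub hP.posSemidef hSw 0).mp
    (by simpa only [sub_zero] using hP.posSemidef_fromBlocks (A := A) hSw)
  rw [sub_zero] at hpsd
  refine hpsd.posDef_iff_det_ne_zero.mpr fun h => ?_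
  have hdet := hP.det_mul_det_condCov (A := A) hSw
  rw [h, mul_zero] at hdet
  exact (mul_pos hP.det_pos hSw.det_pos).ne' hdet.symm

lemma PosDef.log_det_condCov (hP : P.PosDef) (hSw : Sw.PosDef) :
    Real.log (condCov A Sw P).det =
      Real.log P.det + Real.log Sw.det - Real.log (A * P * Aᵀ + Sw).det := by
  have hlog := congrArg Real.log (hP.det_mul_det_condCov (A := A) hSw)
  rw [Real.log_mul (hP.posSemidef.posDef_mul_mul_transpose_add hSw).det_pos.ne'
    (posDef_condCov hP hSw).det_pos.ne', Real.log_mul hP.det_pos.ne' hSw.det_pos.ne'] at hlog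
  linarith

end Matrix

lemma Finset.sum_Icc_sub_shift (a b : ℕ → ℝ) (n : ℕ) :
    ∑ t ∈ Icc 1 n, (b (t - 1) - a t) = ∑ t ∈ range n, (b t - a t) + a 0 - a n := by
  induction n with
  | zero => simp
  | succ n ih =>
    rw [sum_Icc_succ_top (by omega), ih, sum_range_succ, Nat.add_sub_cancel]
    ring

section GaussianSRD

variable {m : Type*} [Fintype m] [DecidableEq m] {A Sw : Matrix m m ℝ}
  {P : ℕ → Matrix m m ℝ} {n : ℕ}

noncomputable def condCovSeq (A Sw : Matrix m m ℝ) (P : ℕ → Matrix m m ℝ) (n t : ℕ) :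
    Matrix m m ℝ :=
  if t < n then condCov A Sw (P t) else P t

lemma condCovSeq_self : condCovSeq A Sw P n n = P n := if_neg (lt_irrefl n)

lemma posDef_condCovSeq (hSw : Sw.PosDef) (hP : ∀ t ≤ n, (P t).PosDef) :
    ∀ t ≤ n, (condCovSeq A Sw P n t).PosDef := by
  intro t ht
  unfold condCovSeq
  split_ifs
  exacts [posDef_condCov (hP t ht) hSw, hP t ht]

lemma posSemidef_fromBlocks_condCovSeq (hSw : Sw.PosDef) (hP : ∀ t ≤ n, (P t).PosDef) {t : ℕ}
    (ht : t < n) :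
    (fromBlocks (P t - condCovSeq A Sw P n t) (P t * Aᵀ) (A * P t)
      (A * P t * Aᵀ + Sw)).PosSemidef := by
  rw [condCovSeq, if_pos ht,
    posSemidef_fromBlocks_iff_posSemidef_condCov_sub (hP t ht.le).posSemidef hSw, sub_self]
  exact .zero

lemma sum_log_det_le_sum_log_det_condCovSeq (hSw : Sw.PosDef) (hP : ∀ t ≤ n, (P t).PosDef)
    {Q : ℕ → Matrix m m ℝ} (hQ : ∀ t ≤ n, (Q t).PosDef) (hQn : Q n = P n)
    (hblk : ∀ t < n, (fromBlocks (P t - Q t) (P t * Aᵀ) (A * P t)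
      (A * P t * Aᵀ + Sw)).PosSemidef) :
    ∑ t ∈ range (n + 1), (1 / 2) * Real.log (Q t).det ≤
      ∑ t ∈ range (n + 1), (1 / 2) * Real.log (condCovSeq A Sw P n t).det := by
  rw [sum_range_succ, sum_range_succ, condCovSeq_self, hQn]
  refine add_le_add_left (sum_le_sum fun t ht => ?_) _
  rw [mem_range] at ht
  have hQt := hQ t ht.le
  have hle := (posSemidef_fromBlocks_iff_posSemidef_condCov_sub (hP t ht.le).posSemidef hSw
    (Q t)).mp (hblk t ht)
  rw [condCovSeq, if_pos ht]
  exact mul_le_mul_of_nonneg_left (Real.log_le_log hQt.det_pos (hQt.det_le_det hle))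
    (by norm_num)

lemma srdObjective_eq (Sx0 : Matrix m m ℝ) (hSw : Sw.PosDef) (hP : ∀ t ≤ n, (P t).PosDef)
    (c : ℝ) (hc : c = (1 / 2) * Real.log Sx0.det + ((n : ℝ) / 2) * Real.log Sw.det) :
    (1 / 2) * Real.log Sx0.det - (1 / 2) * Real.log (P 0).det +
        ∑ t ∈ Icc 1 n, ((1 / 2) * Real.log (A * P (t - 1) * Aᵀ + Sw).det -
          (1 / 2) * Real.log (P t).det) =
      c - ∑ t ∈ range (n + 1), (1 / 2) * Real.log (condCovSeq A Sw P n t).det := by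
  have hsum : ∑ t ∈ range n, (1 / 2) * Real.log (condCovSeq A Sw P n t).det =
      ∑ t ∈ range n, ((1 / 2) * Real.log (P t).det -
        (1 / 2) * Real.log (A * P t * Aᵀ + Sw).det + (1 / 2) * Real.log Sw.det) := by
    refine sum_congr rfl fun t ht => ?_
    rw [condCovSeq, if_pos (mem_range.mp ht), (hP t (mem_range.mp ht).le).log_det_condCov hSw]
    ring
  rw [sum_Icc_sub_shift (fun t => (1 / 2) * Real.log (P t).det)
      (fun t => (1 / 2) * Real.log (A * P t * Aᵀ + Sw).det),
    sum_range_succ, hsum, condCovSeq_self, hc, sum_add_distrib, sum_sub_distrib, sum_sub_distrib,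
    sum_const, card_range, nsmul_eq_mul]
  ring

end GaussianSRD

theorem stmt_14_general {p : ℕ} (n : ℕ)
    (A Sw Sx0 : Matrix (Fin p) (Fin p) ℝ) (hSw : Sw.PosDef)
    (D : ℝ)
    (c : ℝ) (hc : c = (1 / 2) * Real.log Sx0.det + ((n : ℝ) / 2) * Real.log Sw.det) :
    sInf {x : EReal | ∃ P : ℕ → Matrix (Fin p) (Fin p) ℝ,
        (∀ t ≤ n, (P t).PosDef) ∧ (Sx0 - P 0).PosSemidef ∧
        (∀ t, 1 ≤ t → t ≤ n → (A * P (t - 1) * Aᵀ + Sw - P t).PosSemidef) ∧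
        (∀ t ≤ n, (P t).trace ≤ D) ∧
        x = (((n : ℝ) + 1)⁻¹ *
          ((1 / 2) * Real.log Sx0.det - (1 / 2) * Real.log (P 0).det +
            ∑ t ∈ Finset.Icc 1 n,
              ((1 / 2) * Real.log (A * P (t - 1) * Aᵀ + Sw).det -
                (1 / 2) * Real.log (P t).det)) : ℝ)} =
      sInf {x : EReal | ∃ P Q : ℕ → Matrix (Fin p) (Fin p) ℝ,
        (∀ t ≤ n, (P t).PosDef) ∧ (Sx0 - P 0).PosSemidef ∧
        (∀ t, 1 ≤ t → t ≤ n → (A * P (t - 1) * Aᵀ + Sw - P t).PosSemidef) ∧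
        (∀ t ≤ n, (P t).trace ≤ D) ∧
        (∀ t ≤ n, (Q t).PosDef) ∧ Q n = P n ∧
        (∀ t, t < n →
          (Matrix.fromBlocks (P t - Q t) (P t * Aᵀ) (A * P t)
            (A * P t * Aᵀ + Sw)).PosSemidef) ∧
        x = (((n : ℝ) + 1)⁻¹ *
          (c - ∑ t ∈ Finset.range (n + 1), (1 / 2) * Real.log (Q t).det) : ℝ)} := by
  apply le_antisymm
  · refine le_sInf ?_
    rintro _ ⟨P, Q, hP, h0, hrec, htr, hQ, hQn, hblk, rfl⟩
    refine le_trans (sInf_le ⟨P, hP, h0, hrec, htr, rfl⟩) (EReal.coe_le_coe_iff.mpr ?_)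
    rw [srdObjective_eq Sx0 hSw hP c hc]
    exact mul_le_mul_of_nonneg_left
      (sub_le_sub_left (sum_log_det_le_sum_log_det_condCovSeq hSw hP hQ hQn hblk) c)
      (by positivity)
  · refine le_sInf ?_
    rintro _ ⟨P, hP, h0, hrec, htr, rfl⟩
    apply sInf_le
    refine ⟨P, condCovSeq A Sw P n, hP, h0, hrec, htr, posDef_condCovSeq hSw hP,
      condCovSeq_self, fun t => posSemidef_fromBlocks_condCovSeq hSw hP, ?_⟩
    rw [srdObjective_eq Sx0 hSw hP c hc]

/-- Equality of the finite-horizon Gaussian SRD optimization (log-det form) with its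
determinant-maximization / semidefinite program reformulation. -/
theorem stmt_14 {p : ℕ} (hp : 1 ≤ p) (n : ℕ)
    (A Sw Sx0 : Matrix (Fin p) (Fin p) ℝ) (hSw : Sw.PosDef) (hSx0 : Sx0.PosDef)
    (D : ℝ) (hD : D > 0)
    (c : ℝ) (hc : c = (1 / 2) * Real.log Sx0.det + ((n : ℝ) / 2) * Real.log Sw.det) :
    sInf {x : EReal | ∃ P : ℕ → Matrix (Fin p) (Fin p) ℝ,
        (∀ t ≤ n, (P t).PosDef) ∧ (Sx0 - P 0).PosSemidef ∧
        (∀ t, 1 ≤ t → t ≤ n → (A * P (t - 1) * Aᵀ + Sw - P t).PosSemidef) ∧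
        (∀ t ≤ n, (P t).trace ≤ D) ∧
        x = (((n : ℝ) + 1)⁻¹ *
          ((1 / 2) * Real.log Sx0.det - (1 / 2) * Real.log (P 0).det +
            ∑ t ∈ Finset.Icc 1 n,
              ((1 / 2) * Real.log (A * P (t - 1) * Aᵀ + Sw).det -
                (1 / 2) * Real.log (P t).det)) : ℝ)} =
      sInf {x : EReal | ∃ P Q : ℕ → Matrix (Fin p) (Fin p) ℝ,
        (∀ t ≤ n, (P t).PosDef) ∧ (Sx0 - P 0).PosSemidef ∧
        (∀ t, 1 ≤ t → t ≤ n → (A * P (t - 1) * Aᵀ + Sw - P t).PosSemidef) ∧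
        (∀ t ≤ n, (P t).trace ≤ D) ∧
        (∀ t ≤ n, (Q t).PosDef) ∧ Q n = P n ∧
        (∀ t, t < n →
          (Matrix.fromBlocks (P t - Q t) (P t * Aᵀ) (A * P t)
            (A * P t * Aᵀ + Sw)).PosSemidef) ∧
        x = (((n : ℝ) + 1)⁻¹ *
          (c - ∑ t ∈ Finset.range (n + 1), (1 / 2) * Real.log (Q t).det) : ℝ)} :=
  stmt_14_general n A Sw Sx0 hSw D c hc
end

section
/- Let A be a p×p real matrix, Σ_w a p×p real positive definite matrix, and D > 0. Then the feasible set of the semidefinite program representing the asymptotic Gaussian SRD function is nonempty: there exist p×p real positive definite matrices P and Q such that P ⪯ A·P·Aᵀ + Σ_w, trace(P) ≤ D, and the 2p×2p block matrix [[P − Q, P·Aᵀ], [A·P, A·P·Aᵀ + Σ_w]] is positive semidefinite. (For instance, P = ε·I_p with 0 < ε ≤ min{D/p, λ_min(Σ_w)} and Q = (P⁻¹ + Aᵀ·Σ_w⁻¹·A)⁻¹ are feasible.) -/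
open Matrix
open scoped ComplexOrder

/-!
Take `P = ε Σ_w` with `ε = D / (D + trace Σ_w) ∈ (0, 1]`: then `trace P ≤ D`, and
`A P Aᵀ + Σ_w - P = ε A Σ_w Aᵀ + (1 - ε) Σ_w ⪰ 0`. With `S = A P Aᵀ + Σ_w ≻ 0`, choose `Q` so that
`P - Q = P Aᵀ S⁻¹ A P`; then the Schur complement of `S` in the block matrix vanishes, so the
block matrix is positive semidefinite, and by the Woodbury identity
`Q = (P⁻¹ + Aᵀ Σ_w⁻¹ A)⁻¹ ≻ 0`.
-/

namespace Matrix

variable {m n 𝕜 : Type*} [Fintype m] [Fintype n] [DecidableEq n] [RCLike 𝕜]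

theorem PosDef.sub_mul_conjTranspose_mul_inv_mul_mul [DecidableEq m] {P : Matrix n n 𝕜}
    {S : Matrix m m 𝕜} (hP : P.PosDef) (hS : S.PosDef) (A : Matrix m n 𝕜) :
    (P - P * Aᴴ * (A * P * Aᴴ + S)⁻¹ * A * P).PosDef := by
  have hR : (P⁻¹ + Aᴴ * S⁻¹ * A).PosDef :=
    hP.inv.add_posSemidef (hS.inv.posSemidef.conjTranspose_mul_mul_same A)
  have hPS : (S + A * P * Aᴴ).PosDef :=
    hS.add_posSemidef (hP.posSemidef.mul_mul_conjTranspose_same A)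
  have woodbury := add_mul_mul_inv_eq_sub P⁻¹ Aᴴ S⁻¹ A hP.inv.isUnit hS.inv.isUnit
  simp only [nonsing_inv_nonsing_inv _ ((isUnit_iff_isUnit_det _).mp hP.isUnit),
    nonsing_inv_nonsing_inv _ ((isUnit_iff_isUnit_det _).mp hS.isUnit)] at woodbury
  rw [add_comm, ← woodbury hPS.isUnit]
  exact hR.inv

theorem posSemidef_fromBlocks_mul_inv_mul_conjTranspose (B : Matrix m n 𝕜) {D : Matrix n n 𝕜}
    (hD : D.PosDef) : (fromBlocks (B * D⁻¹ * Bᴴ) B Bᴴ D).PosSemidef := by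
  have := hD.isUnit.invertible
  rw [PosDef.fromBlocks₂₂ _ _ hD, sub_self]
  exact PosSemidef.zero

end Matrix

/-- The feasible set of the semidefinite program representing the asymptotic Gaussian
SRD function is nonempty: there exist `P ≻ 0`, `Q ≻ 0` with `P ⪯ A·P·Aᵀ + Σ_w`,
`trace P ≤ D`, and `[[P − Q, P·Aᵀ], [A·P, A·P·Aᵀ + Σ_w]] ⪰ 0`. -/
theorem stmt_15 {p : ℕ} (A Sw : Matrix (Fin p) (Fin p) ℝ) (hSw : Sw.PosDef)
    (D : ℝ) (hD : D > 0) :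
    ∃ P Q : Matrix (Fin p) (Fin p) ℝ, P.PosDef ∧ Q.PosDef ∧
      (A * P * Aᵀ + Sw - P).PosSemidef ∧ P.trace ≤ D ∧
      (Matrix.fromBlocks (P - Q) (P * Aᵀ) (A * P) (A * P * Aᵀ + Sw)).PosSemidef := by
  rw [← conjTranspose_eq_transpose_of_trivial A]
  have htr : 0 ≤ Sw.trace := hSw.posSemidef.trace_nonneg
  set ε := D / (D + Sw.trace)
  have hε : 0 < ε := by positivity
  set P := ε • Sw
  have hP : P.PosDef := hSw.smul hε
  have hS : (A * P * Aᴴ + Sw).PosDef :=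
    PosDef.posSemidef_add (hP.posSemidef.mul_mul_conjTranspose_same A) hSw
  refine ⟨P, _, hP, hP.sub_mul_conjTranspose_mul_inv_mul_mul hSw A, ?_, ?_, ?_⟩
  · have hsplit : A * P * Aᴴ + Sw - P = ε • (A * Sw * Aᴴ) + (1 - ε) • Sw := by
      simp only [P, Matrix.mul_smul, Matrix.smul_mul]
      module
    rw [hsplit]
    exact (hSw.posSemidef.mul_mul_conjTranspose_same A).smul hε.le |>.add
      (hSw.posSemidef.smul (sub_nonneg.mpr (div_le_one_of_le₀ (by linarith) (by positivity))))
  · rw [trace_smul, smul_eq_mul, div_mul_eq_mul_div, div_le_iff₀ (by positivity)]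
    nlinarith
  · have hAP : (P * Aᴴ)ᴴ = A * P := by
      rw [conjTranspose_mul, conjTranspose_conjTranspose, hP.1.eq]
    set S := A * P * Aᴴ + Sw
    rw [sub_sub_cancel, Matrix.mul_assoc _ A P, ← hAP]
    exact posSemidef_fromBlocks_mul_inv_mul_conjTranspose _ hS
end
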